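/- arXiv:1009.5304 — 7 statements merged into one kernel-verified Lean document; each statement's English description precedes it below -/
import Mathlib

section
/- Let X be a metric space equipped with a Borel measure μ, and suppose X admits a countable cover by open sets each of finite μ-measure. Let a > 0 and κ > 0, and let Z ⊆ X be a Borel set such that for every x ∈ Z one has limsup_{r→0⁺} r^{−a} μ(closedBall(x,r)) ≥ κ. Then μ(Z) ≥ κ · 2^{−a} · H^a(Z), where H^a is the a-dimensional Hausdorff measure on X. -/
/-!
Fix `c < κ` and an open `U ⊇ Z` of finite measure. The closed balls `B(x, r) ⊆ U` centred in
`Z` with `μ B(x, r) ≥ c rᵃ` form a fine cover of `Z`, and Vitali's lemma extracts a disjoint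
subfamily; it is countable and `∑ c rᵃ ≤ μ U`. Every point of `Z` lies either in one of finitely
many chosen balls or in the threefold enlargement of one of the remaining ones, whose `∑ rᵃ` is
as small as we like. Hence `Z` has covers of arbitrarily small mesh with
`∑ diamᵃ ≤ 2ᵃ μ U / c + o(1)`, that is `Hᵃ(Z) ≤ 2ᵃ μ U / c`. Outer regularity, which the open
cover by sets of finite measure provides, lets `U` shrink to `Z`, and then `c` increase to `κ`.
-/

open MeasureTheory Metric Filter ENNReal Topology

section
variable {X : Type*} [MetricSpace X]

theorem ediam_closedBall_le_ofReal (x : X) (r : ℝ) :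
    ediam (closedBall x r) ≤ ENNReal.ofReal (2 * r) :=
  ediam_le_of_forall_dist_le fun y hy z hz => by
    linarith [dist_triangle_right y z x, mem_closedBall.1 hy, mem_closedBall.1 hz]

theorem ediam_closedBall_rpow_le (x : X) {r a : ℝ} (hr : 0 ≤ r) (ha : 0 ≤ a) :
    ediam (closedBall x r) ^ a ≤ 2 ^ a * ENNReal.ofReal (r ^ a) :=
  calc ediam (closedBall x r) ^ a ≤ ENNReal.ofReal (2 * r) ^ a :=
        rpow_le_rpow (ediam_closedBall_le_ofReal x r) ha
    _ = 2 ^ a * ENNReal.ofReal (r ^ a) := by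
      rw [ENNReal.ofReal_mul zero_le_two, mul_rpow_of_nonneg _ _ ha, ofReal_rpow_of_nonneg hr ha,
        ENNReal.ofReal_ofNat]

theorem ediam_closedBall_three_mul_rpow_le (x : X) {r a : ℝ} (hr : 0 ≤ r) (ha : 0 ≤ a) :
    ediam (closedBall x (3 * r)) ^ a ≤ 6 ^ a * ENNReal.ofReal (r ^ a) :=
  calc ediam (closedBall x (3 * r)) ^ a ≤ 2 ^ a * ENNReal.ofReal ((3 * r) ^ a) :=
        ediam_closedBall_rpow_le x (by linarith) ha
    _ = 6 ^ a * ENNReal.ofReal (r ^ a) := by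
      rw [Real.mul_rpow zero_le_three hr, ENNReal.ofReal_mul (by positivity),
        ← ENNReal.ofReal_rpow_of_nonneg zero_le_three ha, ENNReal.ofReal_ofNat, ← mul_assoc,
        ← ENNReal.mul_rpow_of_nonneg _ _ ha]
      norm_num

theorem Vitali.exists_disjoint_subfamily_covering_off_finite (Z : Set X) (F : Set (X × ℝ))
    (hF_nonneg : ∀ p ∈ F, 0 ≤ p.2) {R : ℝ} (hF_le : ∀ p ∈ F, p.2 ≤ R)
    (hF_fine : ∀ x ∈ Z, ∀ ρ > 0, ∃ r ≤ ρ, (x, r) ∈ F) :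
    ∃ S ⊆ F, S.PairwiseDisjoint (fun p => closedBall p.1 p.2) ∧
      ∀ w : Set (X × ℝ), w.Finite →
        Z ⊆ (⋃ p ∈ w, closedBall p.1 p.2) ∪ ⋃ p ∈ S \ w, closedBall p.1 (3 * p.2) := by
  obtain ⟨S, hSF, hdisj, hmeets⟩ :=
    Vitali.exists_disjoint_subfamily_covering_enlargement (fun p : X × ℝ => closedBall p.1 p.2)
      F Prod.snd 2 one_lt_two hF_nonneg R hF_le
      fun p hp => ⟨p.1, mem_closedBall_self (hF_nonneg p hp)⟩
  refine ⟨S, hSF, hdisj, fun w hw x hx => ?_⟩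
  set K := ⋃ p ∈ w, closedBall p.1 p.2
  by_cases hxK : x ∈ K
  · exact Or.inl hxK
  right
  have hK : IsClosed K := hw.isClosed_biUnion fun p _ => isClosed_closedBall
  obtain ⟨ε, hε, hεK⟩ := Metric.isOpen_iff.1 hK.isOpen_compl x hxK
  obtain ⟨r, hrε, hxr⟩ := hF_fine x hx (ε / 2) (half_pos hε)
  obtain ⟨q, hqS, ⟨y, hyx, hyq⟩, hrq⟩ := hmeets (x, r) hxr
  -- `B(x, r)` misses `K`, so the ball of `S` that it meets is not one of those of `w`
  have hqw : q ∉ w := fun hqw =>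
    hεK (closedBall_subset_ball (by linarith) hyx) (Set.mem_biUnion hqw hyq)
  refine Set.mem_biUnion ⟨hqS, hqw⟩ ?_
  calc dist x q.1 ≤ dist x y + dist y q.1 := dist_triangle _ _ _
    _ ≤ r + q.2 := add_le_add (dist_comm x y ▸ hyx) hyq
    _ ≤ 3 * q.2 := by linarith

end

theorem Set.PairwiseDisjoint.countable_of_measure_pos {X ι : Type*} [MeasurableSpace X]
    {μ : Measure X} {S : Set ι} {B : ι → Set X} (hd : S.PairwiseDisjoint B)
    (hB : ∀ i ∈ S, MeasurableSet (B i)) (hpos : ∀ i ∈ S, 0 < μ (B i))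
    (hfin : μ (⋃ i ∈ S, B i) ≠ ∞) : S.Countable := by
  have := Measure.countable_meas_pos_of_disjoint_of_meas_iUnion_ne_top μ
    (As := fun i : S => B i) (fun i => hB i i.2)
    (fun i j hij => hd i.2 j.2 (Subtype.coe_injective.ne hij))
    (by rwa [Set.biUnion_eq_iUnion] at hfin)
  have hall : {i : S | 0 < μ (B i)} = Set.univ := Set.eq_univ_of_forall fun i => hpos i i.2
  rw [hall, Set.countable_univ_iff] at this
  exact Set.countable_coe_iff.1 this

section
universe u
variable {X : Type u} [MetricSpace X]

theorem exists_countable_cover_tsum_ediam_rpow_le_of_covering_off_finite {Z : Set X}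
    {S : Set (X × ℝ)} (hS : S.Countable) {δ : ℝ} (hδ : 0 < δ)
    (hrad : ∀ p ∈ S, 0 ≤ p.2 ∧ p.2 ≤ δ)
    (hcover : ∀ w : Set (X × ℝ), w.Finite →
      Z ⊆ (⋃ p ∈ w, closedBall p.1 p.2) ∪ ⋃ p ∈ S \ w, closedBall p.1 (3 * p.2))
    {a : ℝ} (ha : 0 ≤ a) {M : ℝ≥0∞} (hM : M ≠ ∞)
    (hsum : ∑' p : S, ENNReal.ofReal (p.1.2 ^ a) ≤ M) :
    ∃ (ι : Type u) (_ : Countable ι) (t : ι → Set X), Z ⊆ ⋃ i, t i ∧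
      (∀ i, ediam (t i) ≤ ENNReal.ofReal (6 * δ)) ∧
      ∑' i, ediam (t i) ^ a ≤ 2 ^ a * M + 6 ^ a * ENNReal.ofReal δ := by
  classical
  set g : X × ℝ → ℝ≥0∞ := fun p => ENNReal.ofReal (p.2 ^ a)
  -- only the balls outside a finite `w` get enlarged, and their `∑ rᵃ` is below `δ`
  obtain ⟨w, hw⟩ : ∃ w : Finset S, ∑' p : ↥((w : Set S)ᶜ), g p < ENNReal.ofReal δ :=
    ((tendsto_order.1 (ENNReal.tendsto_tsum_compl_atTop_zero (ne_top_of_le_ne_top hM hsum))).2 _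
      (ENNReal.ofReal_pos.2 hδ)).exists
  have := hS.to_subtype
  set t : S → Set X := fun p => closedBall p.1.1 (if p ∈ w then p.1.2 else 3 * p.1.2)
  refine ⟨S, inferInstance, t, fun x hx => ?_, fun p => ?_, ?_⟩
  · rcases hcover (Subtype.val '' (w : Set S)) (w.finite_toSet.image _) hx with hx | hx
    · obtain ⟨_, ⟨p, hpw, rfl⟩, hxp⟩ := Set.mem_iUnion₂.1 hx
      exact Set.mem_iUnion.2 ⟨p, by simpa [t, Finset.mem_coe.1 hpw] using hxp⟩
    · obtain ⟨q, ⟨hqS, hqw⟩, hxq⟩ := Set.mem_iUnion₂.1 hx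
      have hqw' : (⟨q, hqS⟩ : S) ∉ w := fun h => hqw ⟨_, h, rfl⟩
      exact Set.mem_iUnion.2 ⟨⟨q, hqS⟩, by simpa [t, hqw'] using hxq⟩
  · have := hrad p p.2
    have hrad3 : (if p ∈ w then p.1.2 else 3 * p.1.2) ≤ 3 * δ := by split_ifs <;> linarith
    exact (ediam_closedBall_le_ofReal _ _).trans (ENNReal.ofReal_le_ofReal (by linarith))
  · have hbound : ∀ p : S, ediam (t p) ^ a ≤
        2 ^ a * g p + 6 ^ a * ((w : Set S)ᶜ.indicator (fun p => g p) p) := fun p => by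
      have hr : 0 ≤ p.1.2 := (hrad p p.2).1
      by_cases hpw : p ∈ w
      · simpa [t, hpw] using ediam_closedBall_rpow_le p.1.1 hr ha
      · simpa [t, hpw] using le_add_self.trans' (ediam_closedBall_three_mul_rpow_le p.1.1 hr ha)
    calc ∑' p : S, ediam (t p) ^ a
        ≤ ∑' p : S, (2 ^ a * g p + 6 ^ a * ((w : Set S)ᶜ.indicator (fun p => g p) p)) :=
          ENNReal.tsum_le_tsum hbound
      _ = 2 ^ a * ∑' p : S, g p + 6 ^ a * ∑' p : ↥((w : Set S)ᶜ), g p := by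
          rw [ENNReal.tsum_add, ENNReal.tsum_mul_left, ENNReal.tsum_mul_left,
            tsum_subtype ((w : Set S)ᶜ) (fun p => g p)]
      _ ≤ 2 ^ a * M + 6 ^ a * ENNReal.ofReal δ := by gcongr

variable [MeasurableSpace X]

def FinelyCoveredByDenseBalls (μ : Measure X) (a : ℝ) (c : ℝ≥0∞) (U Z : Set X) : Prop :=
  ∀ x ∈ Z, ∀ ρ > 0, ∃ r ∈ Set.Ioc 0 ρ,
    closedBall x r ⊆ U ∧ c * ENNReal.ofReal (r ^ a) ≤ μ (closedBall x r)

variable [OpensMeasurableSpace X]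

theorem Set.PairwiseDisjoint.countable_and_tsum_rpow_le_div (μ : Measure X) {U : Set X}
    (hU : μ U ≠ ∞) {a : ℝ} {c : ℝ≥0∞} (hc0 : c ≠ 0) {S : Set (X × ℝ)}
    (hdisj : S.PairwiseDisjoint fun p => closedBall p.1 p.2) (hpos : ∀ p ∈ S, 0 < p.2)
    (hSU : ∀ p ∈ S, closedBall p.1 p.2 ⊆ U)
    (hμ : ∀ p ∈ S, c * ENNReal.ofReal (p.2 ^ a) ≤ μ (closedBall p.1 p.2)) :
    S.Countable ∧ ∑' p : S, ENNReal.ofReal (p.1.2 ^ a) ≤ μ U / c := by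
  have hballsU : (⋃ p ∈ S, closedBall p.1 p.2) ⊆ U := Set.iUnion₂_subset hSU
  have hS : S.Countable := hdisj.countable_of_measure_pos (fun _ _ => measurableSet_closedBall)
    (fun p hp => (ENNReal.mul_pos hc0
      (ENNReal.ofReal_pos.2 (Real.rpow_pos_of_pos (hpos p hp) a)).ne').trans_le (hμ p hp))
    (ne_top_of_le_ne_top hU (measure_mono hballsU))
  refine ⟨hS, ?_⟩
  rw [ENNReal.le_div_iff_mul_le (Or.inl hc0) (Or.inr hU), mul_comm]
  calc c * ∑' p : S, ENNReal.ofReal (p.1.2 ^ a) = ∑' p : S, c * ENNReal.ofReal (p.1.2 ^ a) :=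
        ENNReal.tsum_mul_left.symm
    _ ≤ ∑' p : S, μ (closedBall p.1.1 p.1.2) := ENNReal.tsum_le_tsum fun p => hμ p p.2
    _ = μ (⋃ p ∈ S, closedBall p.1 p.2) :=
      (measure_biUnion hS hdisj fun _ _ => measurableSet_closedBall).symm
    _ ≤ μ U := measure_mono hballsU

theorem FinelyCoveredByDenseBalls.exists_countable_cover_tsum_ediam_rpow_le {μ : Measure X}
    {a : ℝ} {c : ℝ≥0∞} {U Z : Set X} (hfine : FinelyCoveredByDenseBalls μ a c U Z)
    (hU : μ U ≠ ∞) (ha : 0 ≤ a) (hc0 : c ≠ 0) {δ : ℝ} (hδ : 0 < δ) :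
    ∃ (ι : Type u) (_ : Countable ι) (t : ι → Set X), Z ⊆ ⋃ i, t i ∧
      (∀ i, ediam (t i) ≤ ENNReal.ofReal (6 * δ)) ∧
      ∑' i, ediam (t i) ^ a ≤ 2 ^ a * (μ U / c) + 6 ^ a * ENNReal.ofReal δ := by
  set F : Set (X × ℝ) := {p | 0 < p.2 ∧ p.2 ≤ δ ∧ closedBall p.1 p.2 ⊆ U ∧
    c * ENNReal.ofReal (p.2 ^ a) ≤ μ (closedBall p.1 p.2)}
  have hF_fine : ∀ x ∈ Z, ∀ ρ > 0, ∃ r ≤ ρ, (x, r) ∈ F := fun x hx ρ hρ => by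
    obtain ⟨r, ⟨hr0, hrρ⟩, hrU, hrμ⟩ := hfine x hx (min ρ δ) (lt_min hρ hδ)
    exact ⟨r, hrρ.trans (min_le_left _ _), hr0, hrρ.trans (min_le_right _ _), hrU, hrμ⟩
  obtain ⟨S, hSF, hdisj, hcover⟩ := Vitali.exists_disjoint_subfamily_covering_off_finite Z F
    (fun p hp => hp.1.le) (fun p hp => hp.2.1) hF_fine
  obtain ⟨hS, hsum⟩ := hdisj.countable_and_tsum_rpow_le_div μ hU hc0 (fun p hp => (hSF hp).1)
    (fun p hp => (hSF hp).2.2.1) (fun p hp => (hSF hp).2.2.2)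
  exact exists_countable_cover_tsum_ediam_rpow_le_of_covering_off_finite hS hδ
    (fun p hp => ⟨(hSF hp).1.le, (hSF hp).2.1⟩) hcover ha (ENNReal.div_ne_top hU hc0) hsum

end

theorem exists_closedBall_mul_rpow_le_measure {X : Type*} [MetricSpace X] [MeasurableSpace X]
    {μ : Measure X} {x : X} {a : ℝ} {c : ℝ≥0∞}
    (hc : c < limsup (fun r : ℝ => μ (closedBall x r) / ENNReal.ofReal (r ^ a)) (𝓝[>] 0))
    {U : Set X} (hU : U ∈ 𝓝 x) {ρ : ℝ} (hρ : 0 < ρ) :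
    ∃ r ∈ Set.Ioc 0 ρ,
      closedBall x r ⊆ U ∧ c * ENNReal.ofReal (r ^ a) ≤ μ (closedBall x r) := by
  obtain ⟨ε, hε, hεU⟩ := nhds_basis_closedBall.mem_iff.1 hU
  have hsmall : ∀ᶠ r in 𝓝[>] (0 : ℝ), r ∈ Set.Ioc 0 (min ρ ε) :=
    Ioc_mem_nhdsGT (lt_min hρ hε)
  obtain ⟨r, hrc, hr⟩ :=
    ((frequently_lt_of_lt_limsup (by isBoundedDefault) hc).and_eventually hsmall).exists
  exact ⟨r, ⟨hr.1, hr.2.trans (min_le_left _ _)⟩,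
    (closedBall_subset_closedBall (hr.2.trans (min_le_right _ _))).trans hεU,
    ENNReal.mul_le_of_le_div hrc.le⟩

theorem FinelyCoveredByDenseBalls.hausdorffMeasure_le {X : Type*} [MetricSpace X]
    [MeasurableSpace X] [BorelSpace X] {μ : Measure X} {a : ℝ} {c : ℝ≥0∞} {U Z : Set X}
    (hfine : FinelyCoveredByDenseBalls μ a c U Z) (hU : μ U ≠ ∞) (ha : 0 ≤ a) (hc0 : c ≠ 0) :
    μH[a] Z ≤ 2 ^ a * (μ U / c) := by
  set δ : ℕ → ℝ := fun n => 1 / (n + 1)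
  choose ι hι t hcover hdiam hsum using fun n : ℕ =>
    hfine.exists_countable_cover_tsum_ediam_rpow_le hU ha hc0 (Nat.one_div_pos_of_nat (n := n))
  have hδ : Tendsto (fun n => ENNReal.ofReal (δ n)) atTop (𝓝 0) := by
    simpa [δ] using ENNReal.tendsto_ofReal tendsto_one_div_add_atTop_nhds_zero_nat
  calc μH[a] Z ≤ liminf (fun n => ∑' i, ediam (t n i) ^ a) atTop :=
        Measure.hausdorffMeasure_le_liminf_tsum a Z (fun n => ENNReal.ofReal (6 * δ n))
          (by simpa [δ] using
            ENNReal.tendsto_ofReal (tendsto_one_div_add_atTop_nhds_zero_nat.const_mul 6))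
          t (Eventually.of_forall hdiam) (Eventually.of_forall hcover)
    _ ≤ liminf (fun n => 2 ^ a * (μ U / c) + 6 ^ a * ENNReal.ofReal (δ n)) atTop :=
        liminf_le_liminf (Eventually.of_forall hsum)
    _ = 2 ^ a * (μ U / c) := Tendsto.liminf_eq <| by
        simpa using tendsto_const_nhds.add (ENNReal.Tendsto.const_mul hδ (Or.inr (by finiteness)))

theorem MeasureTheory.Measure.OuterRegular.of_isOpen_cover {X : Type*} [TopologicalSpace X]
    [TopologicalSpace.PseudoMetrizableSpace X] [MeasurableSpace X] [BorelSpace X] {μ : Measure X}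
    {V : ℕ → Set X} (hVopen : ∀ i, IsOpen (V i)) (hVcover : ⋃ i, V i = Set.univ)
    (hVfin : ∀ i, μ (V i) < ∞) : μ.OuterRegular :=
  OuterRegular.of_restrict (s := V) (fun i => have : IsFiniteMeasure (μ.restrict (V i)) :=
    ⟨by simpa using hVfin i⟩; inferInstance) hVopen hVcover.symm.subset

theorem density_lower_bound_hausdorff_general
    {X : Type*} [MetricSpace X] [MeasurableSpace X] [BorelSpace X]
    (μ : Measure X)
    (V : ℕ → Set X) (hVopen : ∀ i, IsOpen (V i)) (hVcover : (⋃ i, V i) = Set.univ)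
    (hVfin : ∀ i, μ (V i) < ∞)
    (a : ℝ) (ha : 0 < a) (κ : ℝ≥0∞)
    (Z : Set X)
    (h : ∀ x ∈ Z, κ ≤
      Filter.limsup (fun r : ℝ => μ (closedBall x r) / ENNReal.ofReal (r ^ a)) (𝓝[>] 0)) :
    κ * (2 : ℝ≥0∞) ^ (-a) * μH[a] Z ≤ μ Z := by
  have := Measure.OuterRegular.of_isOpen_cover hVopen hVcover hVfin
  rw [mul_assoc]
  refine ENNReal.mul_le_of_forall_lt fun c hc b hb => (mul_le_mul_right hb.le c).trans ?_
  rw [Z.measure_eq_iInf_isOpen μ]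
  refine le_iInf₂ fun U hZU => le_iInf fun hUo => ?_
  rcases eq_or_ne (μ U) ∞ with hU | hU
  · simp [hU]
  rcases eq_or_ne c 0 with rfl | hc0
  · simp
  have hfine : FinelyCoveredByDenseBalls μ a c U Z := fun x hx ρ hρ =>
    exists_closedBall_mul_rpow_le_measure (hc.trans_le (h x hx)) (hUo.mem_nhds (hZU hx)) hρ
  calc c * (2 ^ (-a) * μH[a] Z) ≤ c * (2 ^ (-a) * (2 ^ a * (μ U / c))) := by
        gcongr; exact hfine.hausdorffMeasure_le hU ha.le hc0
    _ = μ U := by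
        rw [← mul_assoc (2 ^ (-a)), ← ENNReal.rpow_add _ _ two_ne_zero ofNat_ne_top,
          neg_add_cancel, rpow_zero, one_mul, ENNReal.mul_div_cancel hc0 hc.ne_top]

/-- **Federer 2.10.19-type density lower bound.**
If a Borel measure `μ` on a metric space `X` (with a countable open cover of finite measure)
satisfies `limsup_{r→0⁺} r^{-a} μ(closedBall x r) ≥ κ` at every point of a Borel set `Z`,
then `μ Z ≥ κ · 2^{-a} · H^a(Z)`. -/
theorem density_lower_bound_hausdorff
    {X : Type*} [MetricSpace X] [MeasurableSpace X] [BorelSpace X]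
    (μ : Measure X)
    (V : ℕ → Set X) (hVopen : ∀ i, IsOpen (V i)) (hVcover : (⋃ i, V i) = Set.univ)
    (hVfin : ∀ i, μ (V i) < ∞)
    (a : ℝ) (ha : 0 < a) (κ : ℝ≥0∞) (hκ : 0 < κ)
    (Z : Set X) (hZ : MeasurableSet Z)
    (h : ∀ x ∈ Z, κ ≤
      Filter.limsup (fun r : ℝ => μ (closedBall x r) / ENNReal.ofReal (r ^ a)) (𝓝[>] 0)) :
    κ * (2 : ℝ≥0∞) ^ (-a) * μH[a] Z ≤ μ Z :=
  density_lower_bound_hausdorff_general μ V hVopen hVcover hVfin a ha κ Z h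
end

section
/- Fix n ≥ 1, weights w : Fin n → ℕ with w i ≥ 1 for all i, an index i₀, and k ∈ ℕ. Let p ∈ MvPolynomial (Fin n) ℝ be weighted homogeneous of degree k with respect to w, and suppose p vanishes identically on the i₀-th coordinate axis, i.e. eval (s • Pi.single i₀ 1) p = 0 for every s ∈ ℝ. Let x : ℝ → (Fin n → ℝ) satisfy x_{i₀}(t) = O(|t|^{w i₀}) and x_i(t) = o(|t|^{w i}) for every i ≠ i₀, as t → 0. Then eval (x t) p = o(|t|^k) as t → 0. -/
/-!
Expand `p(x(t))` into monomials `x(t)^d`, each of weighted degree `∑ wᵢ dᵢ = k`. Every factor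
`xᵢ(t)^{dᵢ}` is `O(|t|^{wᵢ dᵢ})`, so a monomial is `o(|t|^k)` as soon as it contains some `x_j`
with `j ≠ i₀`. The only monomials that do not are pure powers of `x_{i₀}`, and these are excluded
by vanishing on the axis.
-/

open MvPolynomial Filter Asymptotics Topology

namespace MvPolynomial

variable {R σ : Type*} [CommSemiring R] [DecidableEq σ] {w : σ → ℕ} {k : ℕ}
  {p : MvPolynomial σ R} {i : σ}

/- Evaluation at `eᵢ` kills every monomial except the pure powers of `Xᵢ`, and by homogeneity
(with `w i ≠ 0`) at most one of those occurs in `p`. -/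
theorem IsWeightedHomogeneous.coeff_single_eq_zero_of_eval_piSingle
    (hp : p.IsWeightedHomogeneous w k) (hw : w i ≠ 0) (h : eval (Pi.single i 1) p = 0)
    (m : ℕ) : coeff (Finsupp.single i m) p = 0 := by
  by_contra hc
  have hdeg : Finsupp.weight w (Finsupp.single i m) = k := hp hc
  have heval : eval (Pi.single i 1) p = coeff (Finsupp.single i m) p := by
    rw [eval_eq, Finset.sum_eq_single (Finsupp.single i m)]
    · rw [Finset.prod_eq_one fun j hj => ?_, mul_one]
      rw [Finset.mem_singleton.mp (Finsupp.support_single_subset hj), Pi.single_eq_same, one_pow]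
    · intro d hd hne
      by_cases hsupp : d.support ⊆ {i}
      · refine absurd ?_ hne
        rw [Finsupp.support_subset_singleton.mp hsupp] at hd ⊢
        have := (hp (mem_support_iff.mp hd)).trans hdeg.symm
        simp only [Finsupp.weight_single, smul_eq_mul] at this
        rw [Nat.eq_of_mul_eq_mul_right (Nat.pos_of_ne_zero hw) this]
      · obtain ⟨j, hj, hji⟩ := Finset.not_subset.mp hsupp
        refine mul_eq_zero_of_right _ (Finset.prod_eq_zero hj ?_)
        rw [Pi.single_eq_of_ne (Finset.notMem_singleton.mp hji)]
        exact zero_pow (Finsupp.mem_support_iff.mp hj)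
    · exact fun hm => absurd (notMem_support_iff.mp hm) hc
  exact hc (heval ▸ h)

theorem IsWeightedHomogeneous.exists_ne_ne_zero_of_mem_support
    (hp : p.IsWeightedHomogeneous w k) (hw : w i ≠ 0) (h : eval (Pi.single i 1) p = 0)
    {d : σ →₀ ℕ} (hd : d ∈ p.support) : ∃ j ≠ i, d j ≠ 0 := by
  by_contra! hd_axis
  have hsingle : d = Finsupp.single i (d i) :=
    Finsupp.support_subset_singleton.mp fun j hj =>
      Finset.mem_singleton.mpr (not_imp_comm.mp (hd_axis j) (Finsupp.mem_support_iff.mp hj))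
  exact mem_support_iff.mp hd (hsingle ▸ hp.coeff_single_eq_zero_of_eval_piSingle hw h _)

end MvPolynomial

section Asymptotics

variable {α ι : Type*} [Fintype ι] {l : Filter α}

theorem Asymptotics.isLittleO_eval_of_forall_mem_support {R F : Type*} [NormedCommRing R]
    [SeminormedAddCommGroup F] {x : α → ι → R} {g : α → F} {p : MvPolynomial ι R}
    (h : ∀ d ∈ p.support, (fun t => ∏ i, x t i ^ d i) =o[l] g) :
    (fun t => eval (x t) p) =o[l] g := by
  simp_rw [eval_eq']
  exact IsLittleO.fun_sum (A := fun d t => coeff d p * ∏ i, x t i ^ d i)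
    fun d hd => (h d hd).const_mul_left _

theorem Asymptotics.isLittleO_prod_pow_weight {R 𝕜 : Type*} [NormedCommRing R]
    [NormedField 𝕜] {f : α → ι → R} {g : α → 𝕜} {w : ι → ℕ} {d : ι →₀ ℕ}
    (hO : ∀ i, (fun t => f t i) =O[l] fun t => g t ^ w i) {j : ι} (hj : d j ≠ 0)
    (ho : (fun t => f t j) =o[l] fun t => g t ^ w j) :
    (fun t => ∏ i, f t i ^ d i) =o[l] fun t => g t ^ Finsupp.weight w d := by
  have hg : (fun t => g t ^ Finsupp.weight w d) = fun t => ∏ i, (g t ^ w i) ^ d i := by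
    funext t
    simp only [Finsupp.weight_eq_sum, smul_eq_mul, ← pow_mul, mul_comm (w _),
      Finset.prod_pow_eq_pow_sum]
  rw [hg]
  exact IsLittleO.finsetProd (fun i _ => (hO i).pow (d i))
    ⟨j, Finset.mem_univ j, ho.pow (Nat.pos_of_ne_zero hj)⟩

end Asymptotics

theorem eval_weightedHomogeneous_isLittleO_of_axis_vanishing_general
    (n : ℕ) (w : Fin n → ℕ) (hw : ∀ i, 1 ≤ w i) (i₀ : Fin n) (k : ℕ)
    (p : MvPolynomial (Fin n) ℝ) (hp : p.IsWeightedHomogeneous w k)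
    (haxis : ∀ s : ℝ, MvPolynomial.eval (s • (Pi.single i₀ 1 : Fin n → ℝ)) p = 0)
    (x : ℝ → Fin n → ℝ)
    (hx₀ : (fun t : ℝ => x t i₀) =O[𝓝 0] fun t : ℝ => |t| ^ (w i₀))
    (hx : ∀ i, i ≠ i₀ → (fun t : ℝ => x t i) =o[𝓝 0] fun t : ℝ => |t| ^ (w i)) :
    (fun t : ℝ => MvPolynomial.eval (x t) p) =o[𝓝 0] fun t : ℝ => |t| ^ k := by
  have hO : ∀ i, (fun t : ℝ => x t i) =O[𝓝 0] fun t : ℝ => |t| ^ (w i) := fun i => by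
    rcases eq_or_ne i i₀ with rfl | hi
    exacts [hx₀, (hx i hi).isBigO]
  refine isLittleO_eval_of_forall_mem_support fun d hd => ?_
  obtain ⟨j, hj, hdj⟩ := hp.exists_ne_ne_zero_of_mem_support
    (Nat.one_le_iff_ne_zero.mp (hw i₀)) (by simpa using haxis 1) hd
  rw [← hp (mem_support_iff.mp hd)]
  exact isLittleO_prod_pow_weight hO hdj (hx j hj)

/-- If `p` is weighted homogeneous of degree `k` with respect to weights `w i ≥ 1` and
vanishes identically on the `i₀`-th coordinate axis, and if a curve `x` satisfies
`x i₀ (t) = O(|t|^{w i₀})` and `x i (t) = o(|t|^{w i})` for `i ≠ i₀` as `t → 0`,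
then `p(x(t)) = o(|t|^k)` as `t → 0`. -/
theorem eval_weightedHomogeneous_isLittleO_of_axis_vanishing
    (n : ℕ) (hn : 1 ≤ n) (w : Fin n → ℕ) (hw : ∀ i, 1 ≤ w i) (i₀ : Fin n) (k : ℕ)
    (p : MvPolynomial (Fin n) ℝ) (hp : p.IsWeightedHomogeneous w k)
    (haxis : ∀ s : ℝ, MvPolynomial.eval (s • (Pi.single i₀ 1 : Fin n → ℝ)) p = 0)
    (x : ℝ → Fin n → ℝ)
    (hx₀ : (fun t : ℝ => x t i₀) =O[𝓝 0] fun t : ℝ => |t| ^ (w i₀))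
    (hx : ∀ i, i ≠ i₀ → (fun t : ℝ => x t i) =o[𝓝 0] fun t : ℝ => |t| ^ (w i)) :
    (fun t : ℝ => MvPolynomial.eval (x t) p) =o[𝓝 0] fun t : ℝ => |t| ^ k :=
  eval_weightedHomogeneous_isLittleO_of_axis_vanishing_general n w hw i₀ k p hp haxis x hx₀ hx
end

section
/- Fix n ≥ 1, a nondecreasing weight vector d : Fin n → ℕ with d j ≥ 1 for all j, weighted homogeneous polynomials a_j^l of degree d l − d j for each pair with d l > d j, and the associated triangular frame X_j(x) = e_j + Σ_{l : d l > d j} a_j^l(x) e_l on ℝⁿ. Let q ≥ 1 be an integer. Let γ : (−1,1) → ℝⁿ be a C¹ curve with γ(0) = 0, and suppose there exist continuous functions λ_j : (−1,1) → ℝ such that γ'(t) = Σ_j λ_j(t) X_j(γ(t)) for all t, with λ_j ≡ 0 whenever d j > q, and λ_j(0) = 0 whenever d j = q. Then for every j = 1,…,n, the j-th component satisfies γ_j(t) = o(|t|^{(d j)/q}) as t → 0 (real exponent (d j)/q). -/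
/-!
Induction on the weight `d j`, with `ρ t = |t| ^ (1 / q)`. If `γ_l = o(ρ ^ d l)` whenever
`d l < d j`, then every monomial of the weighted homogeneous `a_i^j` has weight `d j - d i < d j`
and so only involves such coordinates, whence `a_i^j (γ t) = o(ρ ^ (d j - d i))`. In the `j`-th
component `γ'_j = ∑ i, λ_i (δ_ij + a_i^j (γ))` of the ODE the terms with `d i > q` vanish, those
with `d i < q` are `O(|t| ^ ((d j - d i) / q)) = o(|t| ^ (d j / q - 1))`, and those with `d i = q`
are `o(1) · O(|t| ^ (d j / q - 1))` because `λ_i 0 = 0`. As `d j / q - 1 > -1`, integrating from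
`0` turns `γ'_j = o(|t| ^ (d j / q - 1))` into `γ_j = o(|t| ^ (d j / q))`.
-/

open MvPolynomial Filter Asymptotics Topology

/-- The triangular frame `X j (x) = e_j + ∑_{l : d l > d j} a_j^l(x) e_l` associated with a
weight vector `d` and coefficient polynomials `a j l`; this is the coordinate expression of a
left-invariant frame generated by a graded basis of a graded group. -/
noncomputable def gradedFrame (n : ℕ) (d : Fin n → ℕ)
    (a : Fin n → Fin n → MvPolynomial (Fin n) ℝ) (j : Fin n) (x : Fin n → ℝ) : Fin n → ℝ :=
  fun l => (if l = j then (1 : ℝ) else 0) +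
    if d j < d l then MvPolynomial.eval x (a j l) else 0

section WeightedHomogeneous

variable {α σ : Type*} {l : Filter α} {w : σ → ℕ} {x : α → σ → ℝ} {ρ : α → ℝ}

theorem isLittleO_prod_pow_of_ne_zero {s : σ →₀ ℕ} (hs : s ≠ 0)
    (hx : ∀ i ∈ s.support, (fun t => x t i) =o[l] fun t => ρ t ^ w i) :
    (fun t => s.prod fun i k => x t i ^ k) =o[l] fun t => ρ t ^ Finsupp.weight w s := by
  have hpow : ∀ i ∈ s.support, (fun t => x t i ^ s i) =o[l] fun t => (ρ t ^ w i) ^ s i :=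
    fun i hi => (hx i hi).pow (Nat.pos_of_ne_zero (Finsupp.mem_support_iff.1 hi))
  refine (IsLittleO.finsetProd (fun i hi => (hpow i hi).isBigO)
    (Finsupp.support_nonempty_iff.2 hs |>.imp fun i hi => ⟨hi, hpow i hi⟩)).congr_right fun t => ?_
  simp only [Finsupp.weight_apply, Finsupp.sum, smul_eq_mul, ← pow_mul, Finset.prod_pow_eq_pow_sum,
    mul_comm]

theorem MvPolynomial.IsWeightedHomogeneous.isLittleO_eval {p : MvPolynomial σ ℝ} {m : ℕ}
    (hp : p.IsWeightedHomogeneous w m) (hm : m ≠ 0)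
    (hx : ∀ i, w i ≤ m → (fun t => x t i) =o[l] fun t => ρ t ^ w i) :
    (fun t => eval (x t) p) =o[l] fun t => ρ t ^ m := by
  simp only [eval_eq]
  refine IsLittleO.fun_sum fun s hs => IsLittleO.const_mul_left ?_ _
  have hws : Finsupp.weight w s = m := hp (mem_support_iff.1 hs)
  have hs0 : s ≠ 0 := by rintro rfl; exact hm (by simpa using hws.symm)
  rw [← hws]
  refine isLittleO_prod_pow_of_ne_zero hs0 fun i hi => hx i ?_
  rw [← hws]
  exact Finsupp.le_weight_of_ne_zero' w (Finsupp.mem_support_iff.1 hi)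

end WeightedHomogeneous

theorem isLittleO_abs_rpow_nhdsNE_zero {β γ : ℝ} (h : β < γ) :
    (fun t : ℝ => |t| ^ γ) =o[𝓝[≠] 0] fun t => |t| ^ β := by
  have hlim : Tendsto (fun t : ℝ => |t| ^ (γ - β)) (𝓝[≠] 0) (𝓝 0) := by
    have := ((continuous_abs.tendsto (0 : ℝ)).rpow_const (Or.inr (sub_nonneg.2 h.le)))
    rw [abs_zero, Real.zero_rpow (sub_ne_zero.2 h.ne')] at this
    exact this.mono_left nhdsWithin_le_nhds
  refine (isLittleO_iff_tendsto' ?_).2 (hlim.congr' ?_)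
  · filter_upwards [self_mem_nhdsWithin] with t ht h0
    exact absurd h0 (Real.rpow_pos_of_pos (abs_pos.2 ht) _).ne'
  · filter_upwards [self_mem_nhdsWithin] with t ht
    rw [Real.rpow_sub (abs_pos.2 ht)]

theorem isLittleO_mul_of_isBigO_abs_rpow {μ F : ℝ → ℝ} {β γ : ℝ} (hμ : ContinuousAt μ 0)
    (hF : F =O[𝓝[≠] 0] fun t => |t| ^ β) (h : γ < β ∨ γ = β ∧ μ 0 = 0) :
    (fun t => μ t * F t) =o[𝓝[≠] 0] fun t => |t| ^ γ := by
  rcases h with hlt | ⟨rfl, hμ0⟩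
  · have hbdd : μ =O[𝓝[≠] 0] fun _ => (1 : ℝ) := (hμ.tendsto.isBigO_one ℝ).mono nhdsWithin_le_nhds
    exact (hbdd.mul hF).trans_isLittleO
      ((isLittleO_abs_rpow_nhdsNE_zero hlt).congr_left fun t => (one_mul _).symm)
  · have hsmall : μ =o[𝓝[≠] 0] fun _ => (1 : ℝ) :=
      ((isLittleO_one_iff ℝ).2 (by simpa only [hμ0] using hμ.tendsto)).mono nhdsWithin_le_nhds
    simpa using hsmall.mul_isBigO hF

theorem isLittleO_nhdsGE_of_hasDerivAt {f f' : ℝ → ℝ} {α : ℝ} (hα : 0 < α) (hf0 : f 0 = 0)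
    (hd : ∀ᶠ t in 𝓝 0, HasDerivAt f (f' t) t) (hc : ∀ᶠ t in 𝓝 0, ContinuousAt f' t)
    (h : f' =o[𝓝[≠] 0] fun t => |t| ^ (α - 1)) :
    f =o[𝓝[≥] 0] fun t => |t| ^ α := by
  refine isLittleO_iff.2 fun ε hε => ?_
  have hb : ∀ᶠ s in 𝓝 0, s ≠ 0 → ‖f' s‖ ≤ ε * α * ‖|s| ^ (α - 1)‖ :=
    eventually_nhdsWithin_iff.1 (isLittleO_iff.1 h (by positivity))
  obtain ⟨δ, hδ, hball⟩ := Metric.eventually_nhds_iff_ball.1 (hd.and (hc.and hb))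
  filter_upwards [Ico_mem_nhdsGE hδ] with t ⟨ht0, htδ⟩
  have hsub : Set.uIcc 0 t ⊆ Metric.ball 0 δ := by
    rw [Set.uIcc_of_le ht0]
    intro s hs
    rw [Metric.mem_ball, Real.dist_eq, sub_zero, abs_of_nonneg hs.1]
    exact hs.2.trans_lt htδ
  have hftc : ∫ s in 0..t, f' s = f t := by
    rw [intervalIntegral.integral_eq_sub_of_hasDerivAt (fun s hs => (hball s (hsub hs)).1)
      (continuousOn_of_forall_continuousAt fun s hs => (hball s (hsub hs)).2.1).intervalIntegrable,
      hf0, sub_zero]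
  have hbound : ∀ s ∈ Set.Ioc 0 t, ‖f' s‖ ≤ ε * α * s ^ (α - 1) := fun s hs => by
    have hs' : s ∈ Set.uIcc 0 t := by
      rw [Set.uIcc_of_le ht0]
      exact Set.Ioc_subset_Icc_self hs
    simpa [abs_of_pos hs.1, abs_of_nonneg (Real.rpow_nonneg hs.1.le _)] using
      (hball s (hsub hs')).2.2 hs.1.ne'
  calc ‖f t‖ = ‖∫ s in 0..t, f' s‖ := by rw [hftc]
    _ ≤ ∫ s in 0..t, ε * α * s ^ (α - 1) :=
      intervalIntegral.norm_integral_le_of_norm_le ht0 (MeasureTheory.ae_of_all _ hbound)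
        ((intervalIntegral.intervalIntegrable_rpow' (by linarith)).const_mul _)
    _ = ε * ‖|t| ^ α‖ := by
      rw [intervalIntegral.integral_const_mul, integral_rpow (Or.inl (by linarith)), sub_add_cancel,
        Real.zero_rpow hα.ne', sub_zero, Real.norm_eq_abs, abs_of_nonneg ht0,
        abs_of_nonneg (Real.rpow_nonneg ht0 _)]
      field_simp

theorem isLittleO_nhds_of_hasDerivAt {f f' : ℝ → ℝ} {α : ℝ} (hα : 0 < α) (hf0 : f 0 = 0)
    (hd : ∀ᶠ t in 𝓝 0, HasDerivAt f (f' t) t) (hc : ∀ᶠ t in 𝓝 0, ContinuousAt f' t)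
    (h : f' =o[𝓝[≠] 0] fun t => |t| ^ (α - 1)) :
    f =o[𝓝 0] fun t => |t| ^ α := by
  have hneg : Tendsto Neg.neg (𝓝 (0 : ℝ)) (𝓝 0) := by simpa using (continuous_neg.tendsto (0 : ℝ))
  have hneg_ne : Tendsto Neg.neg (𝓝[≠] (0 : ℝ)) (𝓝[≠] 0) :=
    tendsto_nhdsWithin_of_tendsto_nhds_of_eventually_within _
      (hneg.mono_left nhdsWithin_le_nhds)
      (eventually_nhdsWithin_of_forall fun t ht => neg_ne_zero.2 ht)
  have hneg_le : Tendsto Neg.neg (𝓝[≤] (0 : ℝ)) (𝓝[≥] 0) :=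
    tendsto_nhdsWithin_of_tendsto_nhds_of_eventually_within _
      (hneg.mono_left nhdsWithin_le_nhds)
      (eventually_nhdsWithin_of_forall fun t ht => Set.mem_Ici.2 (neg_nonneg.2 ht))
  have hreflected := isLittleO_nhdsGE_of_hasDerivAt (f := fun t => f (-t)) (f' := fun t => -f' (-t))
    hα (by simpa using hf0)
    ((hneg.eventually hd).mono fun t ht => by
      simpa [Function.comp_def] using ht.comp t (hasDerivAt_neg t))
    ((hneg.eventually hc).mono fun t ht => (ht.comp continuousAt_neg).neg)
    (by simpa [Function.comp_def] using (h.comp_tendsto hneg_ne).neg_left)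
  rw [← nhdsLE_sup_nhdsGE]
  refine IsLittleO.sup ?_ (isLittleO_nhdsGE_of_hasDerivAt hα hf0 hd hc h)
  simpa [Function.comp_def] using hreflected.comp_tendsto hneg_le

theorem abs_rpow_inv_pow (t : ℝ) (q n : ℕ) : (|t| ^ (q : ℝ)⁻¹) ^ n = |t| ^ ((n : ℝ) / q) := by
  rw [← Real.rpow_natCast, ← Real.rpow_mul (abs_nonneg t), inv_mul_eq_div]

section GradedFrame

variable {n : ℕ} {d : Fin n → ℕ} {a : Fin n → Fin n → MvPolynomial (Fin n) ℝ} {i j : Fin n}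

theorem gradedFrame_apply_eq_zero (hji : d j < d i) (x : Fin n → ℝ) :
    gradedFrame n d a i x j = 0 := by
  have hne : j ≠ i := by rintro rfl; exact lt_irrefl _ hji
  simp [gradedFrame, hne, hji.not_gt]

theorem gradedFrame_apply_isBigO {α : Type*} {l : Filter α} {x : α → Fin n → ℝ} {ρ : α → ℝ}
    (hij : d i ≤ d j) (hdi : 0 < d i)
    (ha : d i < d j → (a i j).IsWeightedHomogeneous d (d j - d i))
    (hx : ∀ k, d k < d j → (fun t => x t k) =o[l] fun t => ρ t ^ d k) :
    (fun t => gradedFrame n d a i (x t) j) =O[l] fun t => ρ t ^ (d j - d i) := by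
  rcases hij.lt_or_eq with hlt | hij
  · have hne : j ≠ i := by rintro rfl; exact lt_irrefl _ hlt
    simp only [gradedFrame, if_neg hne, if_pos hlt, zero_add]
    exact ((ha hlt).isLittleO_eval (by omega) fun k hk => hx k (by omega)).isBigO
  · by_cases hji : j = i
    · subst hji
      simpa [gradedFrame] using isBigO_refl (fun _ => (1 : ℝ)) l
    · simpa [gradedFrame, hji, hij] using isBigO_zero (E' := ℝ) (fun t => ρ t ^ (d j - d i)) l

theorem gradedFrame_apply_isBigO_abs_rpow {x : ℝ → Fin n → ℝ} {q : ℕ}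
    (hij : d i ≤ d j) (hdi : 0 < d i)
    (ha : d i < d j → (a i j).IsWeightedHomogeneous d (d j - d i))
    (hx : ∀ k, d k < d j → (fun t => x t k) =o[𝓝[≠] 0] fun t => |t| ^ ((d k : ℝ) / q)) :
    (fun t => gradedFrame n d a i (x t) j) =O[𝓝[≠] 0]
      fun t => |t| ^ (((d j : ℝ) - d i) / q) := by
  simpa only [abs_rpow_inv_pow, Nat.cast_sub hij] using
    gradedFrame_apply_isBigO (ρ := fun t => |t| ^ (q : ℝ)⁻¹) hij hdi ha
      fun k hk => by simpa only [abs_rpow_inv_pow] using hx k hk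

theorem isLittleO_mul_gradedFrame_apply {x : ℝ → Fin n → ℝ} {μ : ℝ → ℝ} {q : ℕ} (hq : 0 < q)
    (hμ : ContinuousAt μ 0) (hhigh : q < d i → ∀ᶠ t in 𝓝 0, μ t = 0) (hμq : d i = q → μ 0 = 0)
    (hframe : d i ≤ d j → (fun t => gradedFrame n d a i (x t) j) =O[𝓝[≠] 0]
      fun t => |t| ^ (((d j : ℝ) - d i) / q)) :
    (fun t => μ t * gradedFrame n d a i (x t) j) =o[𝓝[≠] 0]
      fun t => |t| ^ ((d j : ℝ) / q - 1) := by
  have hq0 : (0 : ℝ) < q := by exact_mod_cast hq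
  by_cases hqi : q < d i
  · refine (isLittleO_zero _ _).congr' ?_ EventuallyEq.rfl
    filter_upwards [nhdsWithin_le_nhds (hhigh hqi)] with t ht
    rw [ht, zero_mul]
  by_cases hji : d j < d i
  · simp [gradedFrame_apply_eq_zero hji]
  refine isLittleO_mul_of_isBigO_abs_rpow hμ (hframe (not_lt.1 hji)) ?_
  rcases (not_lt.1 hqi).lt_or_eq with hlt | hiq
  · left
    rw [sub_div, sub_lt_sub_iff_left, div_lt_one hq0]
    exact_mod_cast hlt
  · exact Or.inr ⟨by rw [sub_div, hiq, div_self hq0.ne'], hμq hiq⟩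

end GradedFrame

theorem curve_component_isLittleO_of_low_degree_general
    (n : ℕ) (d : Fin n → ℕ) (hd1 : ∀ j, 1 ≤ d j)
    (a : Fin n → Fin n → MvPolynomial (Fin n) ℝ)
    (ha : ∀ j l : Fin n, d j < d l → (a j l).IsWeightedHomogeneous d (d l - d j))
    (q : ℕ) (hq : 1 ≤ q)
    (γ γ' : ℝ → Fin n → ℝ)
    (hγ0 : γ 0 = 0)
    (hderiv : ∀ t ∈ Set.Ioo (-1 : ℝ) 1, HasDerivAt γ (γ' t) t)
    (hγ'c : ContinuousOn γ' (Set.Ioo (-1 : ℝ) 1))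
    (lam : Fin n → ℝ → ℝ)
    (hlamc : ∀ j, ContinuousOn (lam j) (Set.Ioo (-1 : ℝ) 1))
    (hode : ∀ t ∈ Set.Ioo (-1 : ℝ) 1, γ' t = ∑ j, lam j t • gradedFrame n d a j (γ t))
    (hhigh : ∀ j, q < d j → ∀ t ∈ Set.Ioo (-1 : ℝ) 1, lam j t = 0)
    (heq : ∀ j, d j = q → lam j 0 = 0) :
    ∀ j, (fun t : ℝ => γ t j) =o[𝓝 0] fun t : ℝ => |t| ^ ((d j : ℝ) / (q : ℝ)) := by
  have hU : Set.Ioo (-1 : ℝ) 1 ∈ 𝓝 0 := Ioo_mem_nhds (by norm_num) (by norm_num)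
  intro j
  induction j using (InvImage.wf d wellFounded_lt).induction with
  | _ j IH =>
  have hterm : ∀ i, (fun t => lam i t * gradedFrame n d a i (γ t) j) =o[𝓝[≠] 0]
      fun t => |t| ^ ((d j : ℝ) / q - 1) := fun i =>
    isLittleO_mul_gradedFrame_apply hq ((hlamc i).continuousAt hU)
      (fun hqi => eventually_of_mem hU (hhigh i hqi)) (heq i) fun hij =>
        gradedFrame_apply_isBigO_abs_rpow hij (hd1 i) (ha i j) fun k hk =>
          (IH k hk).mono nhdsWithin_le_nhds
  have hγ'j : (fun t => γ' t j) =o[𝓝[≠] 0] fun t => |t| ^ ((d j : ℝ) / q - 1) := by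
    refine (IsLittleO.fun_sum (s := Finset.univ) fun i _ => hterm i).congr' ?_ EventuallyEq.rfl
    filter_upwards [nhdsWithin_le_nhds hU] with t ht
    simp [hode t ht]
  refine isLittleO_nhds_of_hasDerivAt (by have := hd1 j; positivity) (congrFun hγ0 j)
    (eventually_of_mem hU fun t ht => hasDerivAt_pi.1 (hderiv t ht) j)
    (eventually_of_mem hU fun t ht =>
      (continuous_apply j).continuousAt.comp (hγ'c.continuousAt (isOpen_Ioo.mem_nhds ht))) hγ'j

/-- Coordinate form of Proposition 3.4: a `C¹` curve through the origin of degree `≤ q`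
whose pointwise degree at `0` is less than `q` satisfies the weighted little-o estimates
`γ_j(t) = o(|t|^{d j / q})` in all components. -/
theorem curve_component_isLittleO_of_low_degree
    (n : ℕ) (hn : 1 ≤ n) (d : Fin n → ℕ) (hd1 : ∀ j, 1 ≤ d j) (hmono : Monotone d)
    (a : Fin n → Fin n → MvPolynomial (Fin n) ℝ)
    (ha : ∀ j l : Fin n, d j < d l → (a j l).IsWeightedHomogeneous d (d l - d j))
    (q : ℕ) (hq : 1 ≤ q)
    (γ γ' : ℝ → Fin n → ℝ)
    (hγ0 : γ 0 = 0)
    (hderiv : ∀ t ∈ Set.Ioo (-1 : ℝ) 1, HasDerivAt γ (γ' t) t)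
    (hγ'c : ContinuousOn γ' (Set.Ioo (-1 : ℝ) 1))
    (lam : Fin n → ℝ → ℝ)
    (hlamc : ∀ j, ContinuousOn (lam j) (Set.Ioo (-1 : ℝ) 1))
    (hode : ∀ t ∈ Set.Ioo (-1 : ℝ) 1, γ' t = ∑ j, lam j t • gradedFrame n d a j (γ t))
    (hhigh : ∀ j, q < d j → ∀ t ∈ Set.Ioo (-1 : ℝ) 1, lam j t = 0)
    (heq : ∀ j, d j = q → lam j 0 = 0) :
    ∀ j, (fun t : ℝ => γ t j) =o[𝓝 0] fun t : ℝ => |t| ^ ((d j : ℝ) / (q : ℝ)) :=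
  curve_component_isLittleO_of_low_degree_general n d hd1 a ha q hq γ γ' hγ0 hderiv hγ'c lam hlamc
    hode hhigh heq
end

section
/- Fix n ≥ 1, a nondecreasing weight vector d : Fin n → ℕ with d j ≥ 1 for all j, weighted homogeneous polynomials a_j^l of degree d l − d j for each pair with d l > d j, and the associated triangular frame X_j(x) = e_j + Σ_{l : d l > d j} a_j^l(x) e_l on ℝⁿ. Let q ≥ 1 be an integer and i₀ an index with d i₀ = q. Suppose moreover that for every i with d i > q the polynomial a_{i₀}^i vanishes identically on the i₀-th coordinate axis (a_{i₀}^i(s·e_{i₀}) = 0 for all s ∈ ℝ). Let γ : (−1,1) → ℝⁿ be a C¹ curve with γ(0) = 0, and suppose there exist continuous λ_j : (−1,1) → ℝ with γ'(t) = Σ_j λ_j(t) X_j(γ(t)) for all t, such that λ_j ≡ 0 whenever d j > q, λ_j(0) = 0 for every j ≠ i₀ with d j = q, and λ_{i₀}(0) ≠ 0. Then for every i ≠ i₀, the i-th component satisfies γ_i(t) = o(|t|^{(d i)/q}) as t → 0 (real exponent (d i)/q). -/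
/-!
Write `g(t) = |t|^(1/q)`. Every component is `O(|t|) = O(g^q)` since `γ(0) = 0`; for `l ≠ i₀` with
`d l ≤ q` this improves to `o(g^(d l))`, because `X_j(0) = e_j` gives `γ'_l(0) = λ_l(0) = 0` when
`d l = q`. For `d i > q` argue by strong induction on `d i`: `γ'_i = Σ_{d j ≤ q} λ_j a_j^i(γ)`, and
weighted homogeneity together with the bounds on lower components gives
`a_j^i(γ) = O(g^(d i - d j))`, which is `o(g^(d i - q))` unless `d j = q`. In that case either
`λ_j(0) = 0`, or `j = i₀` and `a_{i₀}^i(γ) = o(g^(d i - q))` since `a_{i₀}^i` vanishes on the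
`i₀`-axis. Integrating `γ'_i = o(g^(d i - q))` from `0` gives `γ_i = o(g^(d i - q) |t|) = o(g^(d i))`.
-/

open MvPolynomial Filter Asymptotics Topology

section WeightedAsymptotics

variable {α σ : Type*} {L : Filter α} {w : σ → ℕ} {f : α → σ → ℝ} {g : α → ℝ}

lemma prod_pow_pow_eq_pow_weight (w : σ → ℕ) (β : σ →₀ ℕ) (x : ℝ) :
    ∏ l ∈ β.support, (x ^ w l) ^ β l = x ^ Finsupp.weight w β := by
  simp only [← pow_mul, Finset.prod_pow_eq_pow_sum, Finsupp.weight_apply, Finsupp.sum,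
    smul_eq_mul, mul_comm]

lemma isBigO_prod_pow_weight (β : σ →₀ ℕ)
    (hf : ∀ l ∈ β.support, (f · l) =O[L] (g · ^ w l)) :
    (fun t => ∏ l ∈ β.support, f t l ^ β l) =O[L] (g · ^ Finsupp.weight w β) := by
  simpa only [prod_pow_pow_eq_pow_weight] using
    IsBigO.finsetProd fun l hl => (hf l hl).pow (β l)

lemma isLittleO_prod_pow_weight (β : σ →₀ ℕ)
    (hf : ∀ l ∈ β.support, (f · l) =O[L] (g · ^ w l))
    (hsmall : ∃ l ∈ β.support, (f · l) =o[L] (g · ^ w l)) :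
    (fun t => ∏ l ∈ β.support, f t l ^ β l) =o[L] (g · ^ Finsupp.weight w β) := by
  obtain ⟨l₀, hl₀, ho⟩ := hsmall
  simpa only [prod_pow_pow_eq_pow_weight] using
    IsLittleO.finsetProd (fun l hl => (hf l hl).pow (β l))
      ⟨l₀, hl₀, ho.pow (Nat.pos_of_ne_zero (Finsupp.mem_support_iff.mp hl₀))⟩

namespace MvPolynomial.IsWeightedHomogeneous

variable {p : MvPolynomial σ ℝ} {m : ℕ}

lemma weight_le_of_mem_vars (hp : p.IsWeightedHomogeneous w m) {l : σ} (hl : l ∈ p.vars) :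
    w l ≤ m := by
  obtain ⟨β, hβ, hlβ⟩ := (mem_vars_iff_mem_support l).mp hl
  rw [← hp (mem_support_iff.mp hβ)]
  exact Finsupp.le_weight_of_ne_zero' w (Finsupp.mem_support_iff.mp hlβ)

lemma constantCoeff_eq_zero (hp : p.IsWeightedHomogeneous w m) (hm : m ≠ 0) :
    constantCoeff p = 0 := by
  rw [constantCoeff_eq]
  exact hp.coeff_eq_zero 0 (by rwa [map_zero, ne_comm])

lemma isBigO_eval (hp : p.IsWeightedHomogeneous w m)
    (hf : ∀ l ∈ p.vars, (f · l) =O[L] (g · ^ w l)) :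
    (fun t => eval (f t) p) =O[L] (g · ^ m) := by
  simp only [eval_eq]
  refine IsBigO.fun_sum fun β hβ => ?_
  rw [← hp (mem_support_iff.mp hβ)]
  refine (isBigO_prod_pow_weight β fun l hl => hf l ?_).const_mul_left _
  exact (mem_vars_iff_mem_support l).mpr ⟨β, hβ, hl⟩

/-- Each monomial either involves only `x_i`, and then cancels against its value on the axis,
or contains a small factor. -/
lemma isLittleO_eval_of_eval_single_eq_zero [DecidableEq σ] (hp : p.IsWeightedHomogeneous w m)
    {i : σ} (haxis : ∀ s, eval (Pi.single i s) p = 0)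
    (hf : ∀ l ∈ p.vars, (f · l) =O[L] (g · ^ w l))
    (hsmall : ∀ l ∈ p.vars, l ≠ i → (f · l) =o[L] (g · ^ w l)) :
    (fun t => eval (f t) p) =o[L] (g · ^ m) := by
  have hsub : ∀ t, eval (f t) p = ∑ β ∈ p.support, coeff β p *
      (∏ l ∈ β.support, f t l ^ β l - ∏ l ∈ β.support, (Pi.single i (f t i) : σ → ℝ) l ^ β l) := by
    intro t
    simp only [mul_sub, Finset.sum_sub_distrib, ← eval_eq, haxis, sub_zero]
  simp only [hsub]
  refine IsLittleO.fun_sum fun β hβ => IsLittleO.const_mul_left ?_ _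
  have hvars : ∀ l ∈ β.support, l ∈ p.vars :=
    fun l hl => (mem_vars_iff_mem_support l).mpr ⟨β, hβ, hl⟩
  rw [← hp (mem_support_iff.mp hβ)]
  by_cases hpure : ∀ l ∈ β.support, l = i
  · have hcancel : ∀ t, ∏ l ∈ β.support, f t l ^ β l =
        ∏ l ∈ β.support, (Pi.single i (f t i) : σ → ℝ) l ^ β l := fun t =>
      Finset.prod_congr rfl fun l hl => by rw [hpure l hl, Pi.single_eq_same]
    simpa only [hcancel, sub_self] using isLittleO_zero _ _
  · push Not at hpure
    obtain ⟨l₀, hl₀, hl₀i⟩ := hpure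
    have hvanish : ∀ t, ∏ l ∈ β.support, (Pi.single i (f t i) : σ → ℝ) l ^ β l = 0 := fun t =>
      Finset.prod_eq_zero hl₀ (by
        rw [Pi.single_eq_of_ne hl₀i, zero_pow (Finsupp.mem_support_iff.mp hl₀)])
    simpa only [hvanish, sub_zero] using isLittleO_prod_pow_weight β
      (fun l hl => hf l (hvars l hl)) ⟨l₀, hl₀, hsmall l₀ (hvars l₀ hl₀) hl₀i⟩

end MvPolynomial.IsWeightedHomogeneous

end WeightedAsymptotics

lemma isLittleO_mul_id_of_hasDerivAt {f f' φ : ℝ → ℝ} (hf0 : f 0 = 0)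
    (hderiv : ∀ᶠ t in 𝓝 0, HasDerivAt f (f' t) t)
    (hφ : ∀ x t, |x| ≤ |t| → ‖φ x‖ ≤ ‖φ t‖) (h : f' =o[𝓝 0] φ) :
    f =o[𝓝 0] fun t => φ t * t := by
  refine isLittleO_iff.mpr fun ε hε => ?_
  obtain ⟨δ, hδ, hball⟩ := Metric.eventually_nhds_iff_ball.mp
    (hderiv.and (isLittleO_iff.mp h hε))
  filter_upwards [Metric.ball_mem_nhds 0 hδ] with t ht
  have hseg : ∀ x ∈ Set.uIcc 0 t, |x| ≤ |t| := fun x hx => by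
    simpa using Set.abs_sub_left_of_mem_uIcc hx
  have hball' : ∀ x ∈ Set.uIcc 0 t, x ∈ Metric.ball (0 : ℝ) δ := fun x hx => by
    simpa using (hseg x hx).trans_lt (by simpa using ht)
  have hbound : ∀ x ∈ Set.uIcc 0 t, ‖f' x‖ ≤ ε * ‖φ t‖ := fun x hx =>
    (hball x (hball' x hx)).2.trans
      (mul_le_mul_of_nonneg_left (hφ x t (hseg x hx)) hε.le)
  have hmvt := Convex.norm_image_sub_le_of_norm_hasDerivWithin_le
    (fun x hx => (hball x (hball' x hx)).1.hasDerivWithinAt) hbound (convex_uIcc 0 t)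
    Set.left_mem_uIcc Set.right_mem_uIcc
  rw [hf0, sub_zero, sub_zero] at hmvt
  rwa [norm_mul, ← mul_assoc]

noncomputable def absRoot (q : ℕ) (t : ℝ) : ℝ := |t| ^ (q : ℝ)⁻¹

namespace absRoot

variable {q : ℕ} {f f' : ℝ → ℝ}

lemma nonneg (q : ℕ) (t : ℝ) : 0 ≤ absRoot q t := Real.rpow_nonneg (abs_nonneg t) _

lemma pow_self (hq : q ≠ 0) (t : ℝ) : absRoot q t ^ q = |t| := by
  rw [absRoot, ← Real.rpow_natCast, ← Real.rpow_mul (abs_nonneg t),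
    inv_mul_cancel₀ (Nat.cast_ne_zero.mpr hq), Real.rpow_one]

lemma pow_eq_abs_rpow (k : ℕ) (t : ℝ) : absRoot q t ^ k = |t| ^ ((k : ℝ) / q) := by
  rw [absRoot, div_eq_inv_mul, Real.rpow_mul (abs_nonneg t), Real.rpow_natCast]

lemma pow_le_pow_of_abs_le {x t : ℝ} (h : |x| ≤ |t|) (k : ℕ) :
    absRoot q x ^ k ≤ absRoot q t ^ k :=
  pow_le_pow_left₀ (nonneg q x)
    (Real.rpow_le_rpow (abs_nonneg x) h (inv_nonneg.mpr q.cast_nonneg)) k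

lemma tendsto_nhds_zero (hq : q ≠ 0) : Tendsto (absRoot q) (𝓝 0) (𝓝 0) := by
  have hcont : Continuous (absRoot q) :=
    continuous_abs.rpow_const fun _ => Or.inr (inv_nonneg.mpr q.cast_nonneg)
  simpa [absRoot, Real.zero_rpow (inv_ne_zero (Nat.cast_ne_zero.mpr hq))] using
    hcont.tendsto 0

lemma isLittleO_pow_pow (hq : q ≠ 0) {b c : ℕ} (hbc : b < c) :
    (absRoot q · ^ c) =o[𝓝 0] (absRoot q · ^ b) :=
  (Asymptotics.isLittleO_pow_pow hbc).comp_tendsto (tendsto_nhds_zero hq)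

lemma pow_self_eq_norm (hq : q ≠ 0) : (absRoot q · ^ q) = fun t => ‖t‖ :=
  funext (pow_self hq)

lemma isBigO_pow_self_of_hasDerivAt (hq : q ≠ 0) {v : ℝ} (hf0 : f 0 = 0)
    (hf : HasDerivAt f v 0) : f =O[𝓝 0] (absRoot q · ^ q) := by
  rw [pow_self_eq_norm hq, isBigO_norm_right]
  simpa [hf0] using hf.hasFDerivAt.isBigO_sub

lemma isLittleO_pow_of_hasDerivAt (hq : q ≠ 0) {k : ℕ} (hk : k ≤ q) {v : ℝ} (hf0 : f 0 = 0)
    (hf : HasDerivAt f v 0) (hv : k = q → v = 0) : f =o[𝓝 0] (absRoot q · ^ k) := by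
  rcases hk.lt_or_eq with hk | rfl
  · exact (isBigO_pow_self_of_hasDerivAt hq hf0 hf).trans_isLittleO (isLittleO_pow_pow hq hk)
  · rw [pow_self_eq_norm hq, isLittleO_norm_right]
    simpa [hf0, hv rfl] using hasDerivAt_iff_isLittleO.mp hf

lemma isLittleO_pow_add_of_hasDerivAt (hq : q ≠ 0) {c : ℕ} (hf0 : f 0 = 0)
    (hderiv : ∀ᶠ t in 𝓝 0, HasDerivAt f (f' t) t) (h : f' =o[𝓝 0] (absRoot q · ^ c)) :
    f =o[𝓝 0] (absRoot q · ^ (c + q)) := by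
  have hmono : ∀ x t : ℝ, |x| ≤ |t| → ‖absRoot q x ^ c‖ ≤ ‖absRoot q t ^ c‖ := fun x t h => by
    simpa only [Real.norm_eq_abs, abs_of_nonneg (pow_nonneg (nonneg q _) c)] using
      pow_le_pow_of_abs_le h c
  refine (isLittleO_mul_id_of_hasDerivAt hf0 hderiv hmono h).trans_isBigO <|
    isBigO_of_le _ fun t => le_of_eq ?_
  rw [norm_mul, pow_add, pow_self hq, norm_mul, Real.norm_eq_abs t, Real.norm_eq_abs |t|,
    abs_abs]

end absRoot

section GradedFrame

variable {n : ℕ} {d : Fin n → ℕ} {a : Fin n → Fin n → MvPolynomial (Fin n) ℝ}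

lemma gradedFrame_apply_of_lt {j l : Fin n} (x : Fin n → ℝ) (h : d j < d l) :
    gradedFrame n d a j x l = eval x (a j l) := by
  have hlj : l ≠ j := fun hlj => h.ne (congrArg d hlj.symm)
  simp [gradedFrame, h, hlj]

lemma gradedFrame_zero (ha : ∀ j l : Fin n, d j < d l →
      (a j l).IsWeightedHomogeneous d (d l - d j)) (j : Fin n) :
    gradedFrame n d a j 0 = Pi.single j 1 := by
  ext l
  by_cases h : d j < d l
  · have hlj : l ≠ j := fun hlj => h.ne (congrArg d hlj.symm)
    rw [gradedFrame_apply_of_lt 0 h, eval_zero, Pi.single_eq_of_ne hlj,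
      (ha j l h).constantCoeff_eq_zero (by omega)]
  · by_cases hlj : l = j
    · subst hlj; simp [gradedFrame]
    · simp [gradedFrame, h, hlj]

lemma sum_smul_gradedFrame_zero (ha : ∀ j l : Fin n, d j < d l →
      (a j l).IsWeightedHomogeneous d (d l - d j)) (c : Fin n → ℝ) :
    ∑ j, c j • gradedFrame n d a j 0 = c := by
  simp only [gradedFrame_zero ha, ← Pi.single_smul, smul_eq_mul, mul_one, Finset.univ_sum_single]

end GradedFrame

section BlowUp

variable {n q : ℕ} {d : Fin n → ℕ} {a : Fin n → Fin n → MvPolynomial (Fin n) ℝ}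
  {i₀ i j : Fin n} {γ : ℝ → Fin n → ℝ} {μ : ℝ → ℝ}

lemma lt_of_mem_vars_coeff (hd1 : ∀ j, 1 ≤ d j)
    (ha : ∀ j l : Fin n, d j < d l → (a j l).IsWeightedHomogeneous d (d l - d j))
    (hji : d j < d i) {l : Fin n} (hl : l ∈ (a j i).vars) : d l < d i := by
  have := (ha j i hji).weight_le_of_mem_vars hl
  have := hd1 j
  omega

lemma isBigO_eval_coeff (hd1 : ∀ j, 1 ≤ d j)
    (ha : ∀ j l : Fin n, d j < d l → (a j l).IsWeightedHomogeneous d (d l - d j))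
    (hji : d j < d i) (hO : ∀ l, d l < d i → (γ · l) =O[𝓝 0] (absRoot q · ^ d l)) :
    (fun t => eval (γ t) (a j i)) =O[𝓝 0] (absRoot q · ^ (d i - d j)) :=
  (ha j i hji).isBigO_eval fun l hl => hO l (lt_of_mem_vars_coeff hd1 ha hji hl)

lemma isLittleO_mul_eval_coeff (hq : q ≠ 0) (hd1 : ∀ j, 1 ≤ d j)
    (ha : ∀ j l : Fin n, d j < d l → (a j l).IsWeightedHomogeneous d (d l - d j))
    (hi₀ : d i₀ = q) (haxis : ∀ s, eval (Pi.single i₀ s) (a i₀ i) = 0)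
    (hiq : q < d i) (hjq : d j ≤ q) (hμ : ContinuousAt μ 0) (heq : j ≠ i₀ → d j = q → μ 0 = 0)
    (hO : ∀ l, d l < d i → (γ · l) =O[𝓝 0] (absRoot q · ^ d l))
    (ho : ∀ l, l ≠ i₀ → d l < d i → (γ · l) =o[𝓝 0] (absRoot q · ^ d l)) :
    (fun t => μ t * eval (γ t) (a j i)) =o[𝓝 0] (absRoot q · ^ (d i - q)) := by
  have hji : d j < d i := by omega
  have hμO : μ =O[𝓝 0] (fun _ => (1 : ℝ)) := hμ.isBigO_one ℝ
  have hvars : ∀ l ∈ (a j i).vars, d l < d i := fun l hl => lt_of_mem_vars_coeff hd1 ha hji hl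
  suffices h : (fun t => μ t * eval (γ t) (a j i)) =o[𝓝 0]
      fun t => 1 * absRoot q t ^ (d i - q) from h.congr_right fun t => one_mul _
  rcases eq_or_ne j i₀ with rfl | hj
  · refine hμO.mul_isLittleO ?_
    simpa only [hi₀] using (ha j i hji).isLittleO_eval_of_eval_single_eq_zero haxis
      (fun l hl => hO l (hvars l hl)) (fun l hl hlj => ho l hlj (hvars l hl))
  rcases hjq.lt_or_eq with hjq | hjq
  · exact hμO.mul_isLittleO <| (isBigO_eval_coeff hd1 ha hji hO).trans_isLittleO <|
      absRoot.isLittleO_pow_pow hq (by omega)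
  · have hμo : μ =o[𝓝 0] (fun _ => (1 : ℝ)) := by
      rw [isLittleO_one_iff]
      simpa [heq hj hjq] using hμ.tendsto
    simpa only [hjq] using hμo.mul_isBigO (isBigO_eval_coeff hd1 ha hji hO)

lemma isLittleO_sum_lam_mul_gradedFrame {lam : Fin n → ℝ → ℝ} (hq : q ≠ 0)
    (hd1 : ∀ j, 1 ≤ d j)
    (ha : ∀ j l : Fin n, d j < d l → (a j l).IsWeightedHomogeneous d (d l - d j))
    (hi₀ : d i₀ = q) (haxis : ∀ s, eval (Pi.single i₀ s) (a i₀ i) = 0) (hiq : q < d i)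
    (hlam : ∀ j, ContinuousAt (lam j) 0) (hhigh : ∀ j, q < d j → ∀ᶠ t in 𝓝 0, lam j t = 0)
    (heq : ∀ j, j ≠ i₀ → d j = q → lam j 0 = 0)
    (hO : ∀ l, d l < d i → (γ · l) =O[𝓝 0] (absRoot q · ^ d l))
    (ho : ∀ l, l ≠ i₀ → d l < d i → (γ · l) =o[𝓝 0] (absRoot q · ^ d l)) :
    (fun t => ∑ j, lam j t * gradedFrame n d a j (γ t) i) =o[𝓝 0] (absRoot q · ^ (d i - q)) := by
  refine IsLittleO.fun_sum fun j _ => ?_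
  rcases lt_or_ge q (d j) with hjq | hjq
  · refine (isLittleO_zero _ _).congr' ?_ EventuallyEq.rfl
    filter_upwards [hhigh j hjq] with t ht
    rw [ht, zero_mul]
  · simpa only [gradedFrame_apply_of_lt _ (hjq.trans_lt hiq)] using
      isLittleO_mul_eval_coeff hq hd1 ha hi₀ haxis hiq hjq (hlam j) (heq j) hO ho

lemma isLittleO_component_of_lt {γ' : ℝ → Fin n → ℝ} {lam : Fin n → ℝ → ℝ} (hq : q ≠ 0)
    (hd1 : ∀ j, 1 ≤ d j)
    (ha : ∀ j l : Fin n, d j < d l → (a j l).IsWeightedHomogeneous d (d l - d j))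
    (hi₀ : d i₀ = q) (haxis : ∀ s, eval (Pi.single i₀ s) (a i₀ i) = 0) (hiq : q < d i)
    (hγ0 : γ 0 = 0) (hderiv : ∀ᶠ t in 𝓝 0, HasDerivAt γ (γ' t) t)
    (hode : ∀ᶠ t in 𝓝 0, γ' t = ∑ j, lam j t • gradedFrame n d a j (γ t))
    (hlam : ∀ j, ContinuousAt (lam j) 0) (hhigh : ∀ j, q < d j → ∀ᶠ t in 𝓝 0, lam j t = 0)
    (heq : ∀ j, j ≠ i₀ → d j = q → lam j 0 = 0)
    (hO : ∀ l, d l < d i → (γ · l) =O[𝓝 0] (absRoot q · ^ d l))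
    (ho : ∀ l, l ≠ i₀ → d l < d i → (γ · l) =o[𝓝 0] (absRoot q · ^ d l)) :
    (γ · i) =o[𝓝 0] (absRoot q · ^ d i) := by
  have hderiv_i : (fun t => γ' t i) =o[𝓝 0] (absRoot q · ^ (d i - q)) := by
    refine (isLittleO_sum_lam_mul_gradedFrame hq hd1 ha hi₀ haxis hiq hlam hhigh heq hO
      ho).congr' ?_ EventuallyEq.rfl
    filter_upwards [hode] with t ht
    simp [ht]
  have := absRoot.isLittleO_pow_add_of_hasDerivAt hq (congrFun hγ0 i)
    (hderiv.mono fun t ht => hasDerivAt_pi.mp ht i) hderiv_i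
  rwa [Nat.sub_add_cancel hiq.le] at this

end BlowUp

theorem curve_component_isLittleO_of_max_degree_general
    (n : ℕ) (d : Fin n → ℕ) (hd1 : ∀ j, 1 ≤ d j)
    (a : Fin n → Fin n → MvPolynomial (Fin n) ℝ)
    (ha : ∀ j l : Fin n, d j < d l → (a j l).IsWeightedHomogeneous d (d l - d j))
    (q : ℕ) (hq : 1 ≤ q) (i₀ : Fin n) (hi₀ : d i₀ = q)
    (haxis : ∀ i : Fin n, q < d i →
      ∀ s : ℝ, MvPolynomial.eval (s • (Pi.single i₀ 1 : Fin n → ℝ)) (a i₀ i) = 0)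
    (γ γ' : ℝ → Fin n → ℝ)
    (hγ0 : γ 0 = 0)
    (hderiv : ∀ t ∈ Set.Ioo (-1 : ℝ) 1, HasDerivAt γ (γ' t) t)
    (lam : Fin n → ℝ → ℝ)
    (hlamc : ∀ j, ContinuousOn (lam j) (Set.Ioo (-1 : ℝ) 1))
    (hode : ∀ t ∈ Set.Ioo (-1 : ℝ) 1, γ' t = ∑ j, lam j t • gradedFrame n d a j (γ t))
    (hhigh : ∀ j, q < d j → ∀ t ∈ Set.Ioo (-1 : ℝ) 1, lam j t = 0)
    (heq : ∀ j, j ≠ i₀ → d j = q → lam j 0 = 0) :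
    ∀ i, i ≠ i₀ → (fun t : ℝ => γ t i) =o[𝓝 0] fun t : ℝ => |t| ^ ((d i : ℝ) / (q : ℝ)) := by
  have hq0 : q ≠ 0 := by omega
  have hI : Set.Ioo (-1 : ℝ) 1 ∈ 𝓝 0 := Ioo_mem_nhds (by norm_num) (by norm_num)
  have hderiv₀ : ∀ l, HasDerivAt (γ · l) (lam l 0) 0 := fun l => by
    have h := hasDerivAt_pi.mp (hderiv 0 (mem_of_mem_nhds hI)) l
    rwa [hode 0 (mem_of_mem_nhds hI), hγ0, sum_smul_gradedFrame_zero ha] at h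
  have key : ∀ m i, i ≠ i₀ → d i = m → (γ · i) =o[𝓝 0] (absRoot q · ^ d i) := by
    intro m
    induction m using Nat.strong_induction_on with
    | _ m ih =>
    rintro i hi rfl
    rcases le_or_gt (d i) q with hiq | hiq
    · exact absRoot.isLittleO_pow_of_hasDerivAt hq0 hiq (congrFun hγ0 i) (hderiv₀ i) (heq i hi)
    have ho : ∀ l, l ≠ i₀ → d l < d i → (γ · l) =o[𝓝 0] (absRoot q · ^ d l) :=
      fun l hl hli => ih _ hli l hl rfl
    refine isLittleO_component_of_lt hq0 hd1 ha hi₀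
      (fun s => by simpa [← Pi.single_smul'] using haxis i hiq s) hiq hγ0
      (eventually_of_mem hI hderiv) (eventually_of_mem hI hode)
      (fun j => (hlamc j).continuousAt hI) (fun j hj => eventually_of_mem hI (hhigh j hj))
      heq (fun l hli => ?_) ho
    rcases eq_or_ne l i₀ with rfl | hl
    · simpa only [hi₀] using
        absRoot.isBigO_pow_self_of_hasDerivAt hq0 (congrFun hγ0 l) (hderiv₀ l)
    · exact (ho l hl hli).isBigO
  intro i hi
  simpa only [absRoot.pow_eq_abs_rpow] using key _ i hi rfl

/-- Coordinate form of Proposition 3.1 (blow-up estimates at a point of maximum degree):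
if the curve has degree `q` and pointwise degree exactly `q` at `0`, with tangent direction
aligned with `e_{i₀}` (`d i₀ = q`), and the coefficient polynomials `a_{i₀}^i` vanish on the
`i₀`-axis, then `γ_i(t) = o(|t|^{d i / q})` for every `i ≠ i₀`. -/
theorem curve_component_isLittleO_of_max_degree
    (n : ℕ) (hn : 1 ≤ n) (d : Fin n → ℕ) (hd1 : ∀ j, 1 ≤ d j) (hmono : Monotone d)
    (a : Fin n → Fin n → MvPolynomial (Fin n) ℝ)
    (ha : ∀ j l : Fin n, d j < d l → (a j l).IsWeightedHomogeneous d (d l - d j))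
    (q : ℕ) (hq : 1 ≤ q) (i₀ : Fin n) (hi₀ : d i₀ = q)
    (haxis : ∀ i : Fin n, q < d i →
      ∀ s : ℝ, MvPolynomial.eval (s • (Pi.single i₀ 1 : Fin n → ℝ)) (a i₀ i) = 0)
    (γ γ' : ℝ → Fin n → ℝ)
    (hγ0 : γ 0 = 0)
    (hderiv : ∀ t ∈ Set.Ioo (-1 : ℝ) 1, HasDerivAt γ (γ' t) t)
    (hγ'c : ContinuousOn γ' (Set.Ioo (-1 : ℝ) 1))
    (lam : Fin n → ℝ → ℝ)
    (hlamc : ∀ j, ContinuousOn (lam j) (Set.Ioo (-1 : ℝ) 1))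
    (hode : ∀ t ∈ Set.Ioo (-1 : ℝ) 1, γ' t = ∑ j, lam j t • gradedFrame n d a j (γ t))
    (hhigh : ∀ j, q < d j → ∀ t ∈ Set.Ioo (-1 : ℝ) 1, lam j t = 0)
    (heq : ∀ j, j ≠ i₀ → d j = q → lam j 0 = 0)
    (hi₀ne : lam i₀ 0 ≠ 0) :
    ∀ i, i ≠ i₀ → (fun t : ℝ => γ t i) =o[𝓝 0] fun t : ℝ => |t| ^ ((d i : ℝ) / (q : ℝ)) :=
  curve_component_isLittleO_of_max_degree_general n d hd1 a ha q hq i₀ hi₀ haxis γ γ' hγ0 hderiv lam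
    hlamc hode hhigh heq
end

section
/- Fix n ≥ 1, a weight vector d : Fin n → ℕ with d j ≥ 1 for all j, and an integer q ≥ 1. Let γ : ℝ → ℝⁿ be continuously differentiable with γ(0) = 0 and γ'(0) ≠ 0, and assume that for every j the component satisfies γ_j(t) = o(|t|^{(d j)/q}) as t → 0 (real exponent (d j)/q). For r > 0 set E_r = {t ∈ (−1,1) : |γ_j(t)| ≤ r^{d j} for every j}. Then r^{−q} · ∫_{E_r} ‖γ'(t)‖ dt tends to +∞ as r → 0⁺ (limit along 𝓝_{>0} 0, to atTop), where ‖·‖ is the Euclidean norm. -/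
open Filter Asymptotics Topology MeasureTheory Set

/-!
Near `t = 0` the weighted little-o bounds give `|γ_j(t)| ≤ C^{-d_j/q} |t|^{d_j/q}` for any fixed
`C > 0`, so the whole interval `|t| ≤ C r^q` lies in the box of size `r` once `r` is small. Since
`‖γ'‖` is continuous and positive at `0`, the arclength over that interval is at least about
`2 C ‖γ'(0)‖ r^q`, and `C` is arbitrary.
-/

lemma Real.mul_pow_rpow_div_natCast {C r : ℝ} (hC : 0 ≤ C) (hr : 0 ≤ r) (d : ℕ) {q : ℕ}
    (hq : q ≠ 0) : (C * r ^ q) ^ ((d : ℝ) / q) = C ^ ((d : ℝ) / q) * r ^ d := by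
  rw [Real.mul_rpow hC (by positivity), ← Real.rpow_natCast r q, ← Real.rpow_mul hr,
    ← Real.rpow_natCast r d, mul_div_cancel₀ _ (Nat.cast_ne_zero.mpr hq)]

lemma tendsto_const_mul_pow_nhdsGT_zero {C : ℝ} (hC : 0 < C) {q : ℕ} (hq : q ≠ 0) :
    Tendsto (fun r : ℝ => C * r ^ q) (𝓝[>] 0) (𝓝[>] 0) := by
  refine tendsto_nhdsWithin_iff.mpr ⟨?_, ?_⟩
  · exact ((continuous_const.mul (continuous_pow q)).tendsto' 0 0 (by simp [zero_pow hq])).mono_left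
      nhdsWithin_le_nhds
  · filter_upwards [self_mem_nhdsWithin] with r (hr : 0 < r) using mul_pos hC (pow_pos hr q)

lemma eventually_Icc_subset_anisotropicBox {ι : Type*} [Finite ι] {γ : ℝ → ι → ℝ} {d : ι → ℕ}
    {q : ℕ} (hq : q ≠ 0)
    (hγ : ∀ j, (fun t : ℝ => γ t j) =o[𝓝 0] fun t : ℝ => |t| ^ ((d j : ℝ) / q))
    {C : ℝ} (hC : 0 < C) :
    ∀ᶠ r in 𝓝[>] 0, Icc (-(C * r ^ q)) (C * r ^ q) ⊆ {t | ∀ j, |γ t j| ≤ r ^ d j} := by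
  have hsmall : ∀ᶠ t in 𝓝 (0 : ℝ), ∀ j,
      |γ t j| ≤ C ^ (-((d j : ℝ) / q)) * |t| ^ ((d j : ℝ) / q) := by
    refine eventually_all.mpr fun j => ?_
    filter_upwards [(hγ j).def (Real.rpow_pos_of_pos hC _)] with t ht
    simpa [abs_of_nonneg (Real.rpow_nonneg (abs_nonneg t) _)] using ht
  obtain ⟨δ, hδ, hδsmall⟩ := Metric.eventually_nhds_iff.mp hsmall
  filter_upwards [(tendsto_const_mul_pow_nhdsGT_zero hC hq).eventually (Ioo_mem_nhdsGT hδ),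
    self_mem_nhdsWithin] with r ⟨_, hRδ⟩ (hr : 0 < r) t ht j
  have htR : |t| ≤ C * r ^ q := abs_le.mpr ht
  calc |γ t j| ≤ C ^ (-((d j : ℝ) / q)) * |t| ^ ((d j : ℝ) / q) :=
        hδsmall (by simpa using htR.trans_lt hRδ) j
    _ ≤ C ^ (-((d j : ℝ) / q)) * (C * r ^ q) ^ ((d j : ℝ) / q) := by gcongr
    _ = r ^ d j := by
        rw [Real.mul_pow_rpow_div_natCast hC.le hr.le _ hq, ← mul_assoc,
          ← Real.rpow_add hC, neg_add_cancel, Real.rpow_zero, one_mul]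

lemma eventually_mul_le_setIntegral_Icc {f : ℝ → ℝ} (hf : Continuous f) {c : ℝ} (hc : c < f 0) :
    ∀ᶠ R in 𝓝[>] 0, 2 * R * c ≤ ∫ t in Icc (-R) R, f t := by
  obtain ⟨δ, hδ, hδc⟩ := Metric.eventually_nhds_iff.mp
    ((hf.tendsto 0).eventually (eventually_ge_nhds hc))
  filter_upwards [Ioo_mem_nhdsGT hδ] with R ⟨hR, hRδ⟩
  have hfc : ∀ t ∈ Icc (-R) R, c ≤ f t := fun t ht =>
    hδc (by simpa using (abs_le.mpr ht).trans_lt hRδ)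
  have := setIntegral_ge_of_const_le (μ := volume) measurableSet_Icc measure_Icc_lt_top.ne hfc
    hf.integrableOn_Icc
  rwa [Measure.real, Real.volume_Icc, ENNReal.toReal_ofReal (by linarith), smul_eq_mul,
    show R - -R = 2 * R by ring] at this

theorem arclength_in_box_div_rpow_tendsto_atTop_general
    (n : ℕ) (d : Fin n → ℕ)
    (q : ℕ) (hq : 1 ≤ q)
    (γ : ℝ → Fin n → ℝ) (hγ : ContDiff ℝ 1 γ)
    (hγ'0 : deriv γ 0 ≠ 0)
    (hlito : ∀ j, (fun t : ℝ => γ t j) =o[𝓝 0] fun t : ℝ => |t| ^ ((d j : ℝ) / (q : ℝ))) :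
    Tendsto
      (fun r : ℝ =>
        (∫ t in {t : ℝ | t ∈ Set.Ioo (-1 : ℝ) 1 ∧ ∀ j, |γ t j| ≤ r ^ (d j)},
          Real.sqrt (∑ j, (deriv γ t j) ^ 2)) / r ^ q)
      (𝓝[>] 0) atTop := by
  set f : ℝ → ℝ := fun t => Real.sqrt (∑ j, (deriv γ t j) ^ 2)
  have hf : Continuous f := by
    have := hγ.continuous_deriv le_rfl
    fun_prop
  have hf0 : 0 < f 0 := by
    obtain ⟨j, hj⟩ := Function.ne_iff.mp hγ'0
    have hj : deriv γ 0 j ≠ 0 := hj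
    exact Real.sqrt_pos.mpr (Finset.sum_pos' (fun i _ => sq_nonneg _)
      ⟨j, Finset.mem_univ j, by positivity⟩)
  refine tendsto_atTop.mpr fun b => ?_
  obtain ⟨C, hC, hbC⟩ := exists_pos_lt_mul (half_pos hf0) (b / 2)
  have hR := tendsto_const_mul_pow_nhdsGT_zero hC (by omega : q ≠ 0)
  filter_upwards [eventually_Icc_subset_anisotropicBox (by omega) hlito hC,
    hR.eventually (eventually_mul_le_setIntegral_Icc hf (half_lt_self hf0)),
    hR.eventually (Ioo_mem_nhdsGT one_pos), self_mem_nhdsWithin]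
    with r hbox hint ⟨_, hR1⟩ (hr : 0 < r)
  set E := {t : ℝ | t ∈ Ioo (-1 : ℝ) 1 ∧ ∀ j, |γ t j| ≤ r ^ (d j)}
  have hIcc : Icc (-(C * r ^ q)) (C * r ^ q) ⊆ E := fun t ht =>
    ⟨⟨by linarith [ht.1], by linarith [ht.2]⟩, hbox ht⟩
  have hE : E ⊆ Icc (-1) 1 := fun t ht => Ioo_subset_Icc_self ht.1
  have hmono : ∫ t in Icc (-(C * r ^ q)) (C * r ^ q), f t ≤ ∫ t in E, f t :=
    setIntegral_mono_set (hf.integrableOn_Icc.mono_set hE)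
      (Eventually.of_forall fun t => Real.sqrt_nonneg _) hIcc.eventuallyLE
  rw [le_div_iff₀ (pow_pos hr q)]
  calc b * r ^ q ≤ 2 * (C * r ^ q) * (f 0 / 2) := by nlinarith [pow_pos hr q]
    _ ≤ _ := hint.trans hmono

/-- Quantitative core of Proposition 3.5: if all components of a `C¹` curve `γ` through the
origin with `γ'(0) ≠ 0` satisfy the weighted little-o bounds `γ_j(t) = o(|t|^{d j / q})`,
then the Euclidean arclength of `γ` inside the anisotropic box of size `r`, divided by `r^q`,
tends to `+∞` as `r → 0⁺`. -/
theorem arclength_in_box_div_rpow_tendsto_atTop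
    (n : ℕ) (hn : 1 ≤ n) (d : Fin n → ℕ) (hd1 : ∀ j, 1 ≤ d j)
    (q : ℕ) (hq : 1 ≤ q)
    (γ : ℝ → Fin n → ℝ) (hγ : ContDiff ℝ 1 γ) (hγ0 : γ 0 = 0)
    (hγ'0 : deriv γ 0 ≠ 0)
    (hlito : ∀ j, (fun t : ℝ => γ t j) =o[𝓝 0] fun t : ℝ => |t| ^ ((d j : ℝ) / (q : ℝ))) :
    Tendsto
      (fun r : ℝ =>
        (∫ t in {t : ℝ | t ∈ Set.Ioo (-1 : ℝ) 1 ∧ ∀ j, |γ t j| ≤ r ^ (d j)},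
          Real.sqrt (∑ j, (deriv γ t j) ^ 2)) / r ^ q)
      (𝓝[>] 0) atTop :=
  arclength_in_box_div_rpow_tendsto_atTop_general n d q hq γ hγ hγ'0 hlito
end

section
/- Fix n ≥ 1 and a weight vector d : Fin n → ℕ with d j ≥ 1 for all j. Let ρ be a metric on ℝⁿ that induces the Euclidean topology and satisfies ρ(0, δ_r x) = r·ρ(0,x) for all r > 0 and x ∈ ℝⁿ, where (δ_r x)_j = r^{d j}·x_j. Then there exists λ ∈ (0,1] such that for every r > 0, Box(λr) ⊆ {x ∈ ℝⁿ : ρ(0,x) ≤ r} ⊆ Box(r/λ), where Box(s) = {x ∈ ℝⁿ : |x_j| ≤ s^{d j} for every j}. -/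
/-!
Since `ρ(0, ·)` and the boxes are both compatible with the dilations `δ_r`, it suffices to compare
`ρ(0, ·)` with the sup norm of `ℝⁿ` on its unit ball and unit sphere (`Box(1)` and its boundary).
By compactness `ρ(0, ·)` is bounded by some `C` on the ball, and by some `m > 0` from below on the
sphere, where it is positive. Every `x` with `‖x‖ > 1` is moved onto the sphere by some `δ_u`
with `0 < u < 1`, by intermediate values (`d j ≥ 1` gives `δ_0 x = 0`), so `ρ(0, x) > m` there.
Rescaling then gives the comparison with `λ = min (1/C) m`.
-/

open Filter Topology Metric Set

section Premetric

variable {X : Type*} {ρ : X → X → ℝ}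

lemma nonneg_of_symm_of_triangle (hsymm : ∀ x y, ρ x y = ρ y x)
    (htri : ∀ x y z, ρ x z ≤ ρ x y + ρ y z) (hself : ∀ x, ρ x x = 0) (x y : X) : 0 ≤ ρ x y := by
  have := htri x y x
  rw [hself, hsymm y x] at this
  linarith

lemma continuous_of_hasBasis_ball [TopologicalSpace X] (hsymm : ∀ x y, ρ x y = ρ y x)
    (htri : ∀ x y z, ρ x z ≤ ρ x y + ρ y z)
    (hbasis : ∀ x, (𝓝 x).HasBasis (fun ε : ℝ => 0 < ε) fun ε => {y | ρ x y < ε}) (a : X) :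
    Continuous (ρ a) := by
  refine continuous_iff_continuousAt.2 fun x =>
    ((hbasis x).tendsto_iff nhds_basis_ball).2 fun ε hε => ⟨ε, hε, fun y hy => ?_⟩
  replace hy : ρ x y < ε := hy
  rw [mem_ball, Real.dist_eq, abs_sub_lt_iff]
  have hxy := htri a x y
  have hyx := htri a y x
  rw [hsymm y x] at hyx
  constructor <;> linarith

end Premetric

namespace Anisotropic

variable {ι : Type*} (d : ι → ℕ)

def dilate (r : ℝ) (x : ι → ℝ) : ι → ℝ := fun j => r ^ d j * x j

def box (s : ℝ) : Set (ι → ℝ) := {x | ∀ j, |x j| ≤ s ^ d j}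

variable {d} {f : (ι → ℝ) → ℝ}

lemma dilate_dilate (r s : ℝ) (x : ι → ℝ) : dilate d r (dilate d s x) = dilate d (r * s) x := by
  ext j
  simp only [dilate, mul_pow, mul_assoc]

lemma dilate_one (x : ι → ℝ) : dilate d 1 x = x := by
  ext j
  simp [dilate]

lemma dilate_inv_dilate {s : ℝ} (hs : s ≠ 0) (x : ι → ℝ) : dilate d s (dilate d s⁻¹ x) = x := by
  rw [dilate_dilate, mul_inv_cancel₀ hs, dilate_one]

lemma eq_mul_dilate_inv (hhom : ∀ r, 0 < r → ∀ x, f (dilate d r x) = r * f x)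
    {s : ℝ} (hs : 0 < s) (x : ι → ℝ) : f x = s * f (dilate d s⁻¹ x) := by
  rw [← hhom s hs, dilate_inv_dilate hs.ne']

variable [Fintype ι]

lemma mem_box_iff_norm_dilate_inv_le_one {s : ℝ} (hs : 0 < s) (x : ι → ℝ) :
    x ∈ box d s ↔ ‖dilate d s⁻¹ x‖ ≤ 1 := by
  rw [pi_norm_le_iff_of_nonneg zero_le_one]
  refine forall_congr' fun j => ?_
  rw [dilate, Real.norm_eq_abs, abs_mul, abs_pow, abs_of_pos (inv_pos.2 hs), inv_pow,
    inv_mul_le_iff₀ (by positivity), mul_one]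

lemma exists_norm_dilate_eq_one (hd : ∀ j, d j ≠ 0) {x : ι → ℝ} (hx : 1 < ‖x‖) :
    ∃ u ∈ Ioo (0 : ℝ) 1, ‖dilate d u x‖ = 1 := by
  have hcont : Continuous fun u => ‖dilate d u x‖ := by
    unfold dilate
    fun_prop
  have hzero : ‖dilate d 0 x‖ = 0 := by
    rw [norm_eq_zero]
    ext j
    simp [dilate, zero_pow (hd j)]
  have hone : ‖dilate d 1 x‖ = ‖x‖ := by rw [dilate_one]
  exact intermediate_value_Ioo zero_le_one hcont.continuousOn
    (by rw [hzero, hone]; exact ⟨one_pos, hx⟩)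

lemma exists_le_of_norm_le_one (hf : Continuous f) :
    ∃ C, 1 ≤ C ∧ ∀ x, ‖x‖ ≤ 1 → f x ≤ C := by
  obtain ⟨C, hC1, hC⟩ :=
    ((isCompact_closedBall (0 : ι → ℝ) 1).bddAbove_image hf.continuousOn).exists_ge 1
  exact ⟨C, hC1, fun x hx => hC _ ⟨x, mem_closedBall_zero_iff.2 hx, rfl⟩⟩

lemma exists_lt_of_one_lt_norm (hd : ∀ j, d j ≠ 0) (hf : Continuous f)
    (hpos : ∀ x, x ≠ 0 → 0 < f x) (hhom : ∀ r, 0 < r → ∀ x, f (dilate d r x) = r * f x) :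
    ∃ m, 0 < m ∧ ∀ x, 1 < ‖x‖ → m < f x := by
  obtain ⟨m, hm, hmf⟩ := (isCompact_sphere (0 : ι → ℝ) 1).exists_forall_le' hf.continuousOn
    fun x hx => hpos x (ne_zero_of_mem_unit_sphere ⟨x, hx⟩)
  refine ⟨m, hm, fun x hx => ?_⟩
  obtain ⟨u, ⟨hu0, hu1⟩, hux⟩ := exists_norm_dilate_eq_one hd hx
  have hfx : 0 < f x := hpos x (norm_pos_iff.1 (one_pos.trans hx))
  calc m ≤ f (dilate d u x) := hmf _ (mem_sphere_zero_iff_norm.2 hux)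
    _ = u * f x := hhom u hu0 x
    _ < f x := mul_lt_of_lt_one_left hfx hu1

lemma le_mul_of_mem_box (hhom : ∀ r, 0 < r → ∀ x, f (dilate d r x) = r * f x)
    {C s : ℝ} (hC : ∀ y, ‖y‖ ≤ 1 → f y ≤ C) (hs : 0 < s) {x : ι → ℝ}
    (hx : x ∈ box d s) : f x ≤ s * C := by
  rw [eq_mul_dilate_inv hhom hs x]
  exact mul_le_mul_of_nonneg_left (hC _ ((mem_box_iff_norm_dilate_inv_le_one hs x).1 hx)) hs.le

lemma mul_lt_of_not_mem_box (hhom : ∀ r, 0 < r → ∀ x, f (dilate d r x) = r * f x)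
    {m s : ℝ} (hm : ∀ y, 1 < ‖y‖ → m < f y) (hs : 0 < s) {x : ι → ℝ}
    (hx : x ∉ box d s) : s * m < f x := by
  rw [eq_mul_dilate_inv hhom hs x]
  rw [mem_box_iff_norm_dilate_inv_le_one hs x, not_le] at hx
  exact mul_lt_mul_of_pos_left (hm _ hx) hs

end Anisotropic

open Anisotropic

theorem ball_box_comparison_general
    (n : ℕ) (d : Fin n → ℕ) (hd1 : ∀ j, 1 ≤ d j)
    -- `ρ` is a metric on `ℝⁿ` inducing the Euclidean topology
    (ρ : (Fin n → ℝ) → (Fin n → ℝ) → ℝ)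
    (hρsymm : ∀ x y, ρ x y = ρ y x)
    (hρtri : ∀ x y z, ρ x z ≤ ρ x y + ρ y z)
    (hρeq : ∀ x y, ρ x y = 0 ↔ x = y)
    (hρtop : ∀ x : Fin n → ℝ, (𝓝 x).HasBasis (fun ε : ℝ => 0 < ε) fun ε => {y | ρ x y < ε})
    -- homogeneity of `ρ` with respect to the anisotropic dilations
    (hρhom : ∀ r : ℝ, 0 < r → ∀ x : Fin n → ℝ,
      ρ 0 (fun j => r ^ (d j) * x j) = r * ρ 0 x) :
    ∃ lam : ℝ, 0 < lam ∧ lam ≤ 1 ∧ ∀ r : ℝ, 0 < r →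
      {x : Fin n → ℝ | ∀ j, |x j| ≤ (lam * r) ^ (d j)} ⊆ {x : Fin n → ℝ | ρ 0 x ≤ r} ∧
      {x : Fin n → ℝ | ρ 0 x ≤ r} ⊆ {x : Fin n → ℝ | ∀ j, |x j| ≤ (r / lam) ^ (d j)} := by
  have hd : ∀ j, d j ≠ 0 := fun j => Nat.one_le_iff_ne_zero.1 (hd1 j)
  have hcont := continuous_of_hasBasis_ball hρsymm hρtri hρtop 0
  have hpos : ∀ x, x ≠ 0 → 0 < ρ 0 x := fun x hx =>
    (nonneg_of_symm_of_triangle hρsymm hρtri (fun x => (hρeq x x).2 rfl) 0 x).lt_of_ne'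
      fun h => hx ((hρeq 0 x).1 h).symm
  obtain ⟨C, hC1, hC⟩ := exists_le_of_norm_le_one hcont
  obtain ⟨m, hm, hmρ⟩ := exists_lt_of_one_lt_norm hd hcont hpos hρhom
  have hC0 : 0 < C := one_pos.trans_le hC1
  set lam := min C⁻¹ m
  have hlam : 0 < lam := lt_min (inv_pos.2 hC0) hm
  have hlamC : lam * C ≤ 1 := (le_inv_mul_iff₀' hC0).1 (by rw [mul_one]; exact min_le_left C⁻¹ m)
  refine ⟨lam, hlam, (min_le_left _ _).trans (inv_le_one_of_one_le₀ hC1), fun r hr => ⟨?_, ?_⟩⟩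
  · intro x hx
    calc ρ 0 x ≤ lam * r * C := le_mul_of_mem_box hρhom hC (mul_pos hlam hr) hx
      _ = lam * C * r := by ring
      _ ≤ r := mul_le_of_le_one_left hr.le hlamC
  · intro x hx
    by_contra hbox
    have hr_le : r ≤ r / lam * m := by
      rw [div_mul_eq_mul_div, le_div_iff₀ hlam]
      exact mul_le_mul_of_nonneg_left (min_le_right _ _) hr.le
    exact (hr_le.trans_lt (mul_lt_of_not_mem_box hρhom hmρ (div_pos hr hlam) hbox)).not_ge hx

/-- The ball–box comparison for a homogeneous metric: there exists `λ ∈ (0,1]` such that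
`Box(λr) ⊆ {ρ(0,·) ≤ r} ⊆ Box(r/λ)` for every `r > 0`, where
`Box(s) = {x : |x_j| ≤ s^{d j} ∀ j}`. -/
theorem ball_box_comparison
    (n : ℕ) (hn : 1 ≤ n) (d : Fin n → ℕ) (hd1 : ∀ j, 1 ≤ d j)
    -- `ρ` is a metric on `ℝⁿ` inducing the Euclidean topology
    (ρ : (Fin n → ℝ) → (Fin n → ℝ) → ℝ)
    (hρsymm : ∀ x y, ρ x y = ρ y x)
    (hρtri : ∀ x y z, ρ x z ≤ ρ x y + ρ y z)
    (hρeq : ∀ x y, ρ x y = 0 ↔ x = y)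
    (hρtop : ∀ x : Fin n → ℝ, (𝓝 x).HasBasis (fun ε : ℝ => 0 < ε) fun ε => {y | ρ x y < ε})
    -- homogeneity of `ρ` with respect to the anisotropic dilations
    (hρhom : ∀ r : ℝ, 0 < r → ∀ x : Fin n → ℝ,
      ρ 0 (fun j => r ^ (d j) * x j) = r * ρ 0 x) :
    ∃ lam : ℝ, 0 < lam ∧ lam ≤ 1 ∧ ∀ r : ℝ, 0 < r →
      {x : Fin n → ℝ | ∀ j, |x j| ≤ (lam * r) ^ (d j)} ⊆ {x : Fin n → ℝ | ρ 0 x ≤ r} ∧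
      {x : Fin n → ℝ | ρ 0 x ≤ r} ⊆ {x : Fin n → ℝ | ∀ j, |x j| ≤ (r / lam) ^ (d j)} :=
  ball_box_comparison_general n d hd1 ρ hρsymm hρtri hρeq hρtop hρhom
end

section
/- Fix n ≥ 1, a weight vector d : Fin n → ℕ with d j ≥ 1 for all j, an integer q ≥ 1, and an index i₀ with d i₀ = q. Let ρ be a metric on ℝⁿ inducing the Euclidean topology with ρ(0, δ_r x) = r·ρ(0,x) for all r > 0 and x, where (δ_r x)_j = r^{d j}·x_j. Let γ : [−1,1] → ℝⁿ be a C¹ injective curve with γ(0) = 0, such that γ_i(t) = o(|t|^{(d i)/q}) as t → 0 for every i ≠ i₀, and with c := (γ')_{i₀}(0) ≠ 0. For r > 0 define A_r = {t ∈ ℝ : |t| ≤ r^{−q} and ρ(0, γ(t·r^q)) < r}, and let S₀ = {s ∈ ℝ : ρ(0, s·e_{i₀}) < 1}. Then the Lebesgue measure of the symmetric difference A_r Δ (c^{−1}·S₀) tends to 0 as r → 0⁺; moreover there exists M₀ > 0 such that A_r ⊆ [−M₀, M₀] for all sufficiently small r > 0. -/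
/-!
Write `N = ρ 0`. Homogeneity gives `N (γ (t r^q)) = r N (X_r t)` for the rescaled curve
`X_r t = δ_{1/r} (γ (t r^q))`, and the little-o hypotheses (together with `γ'(0)_{i₀} = c`) say
precisely that `X_r t → (c t) e_{i₀}` uniformly for `t` in compact sets. Hence, once the `A_r` are
known to be uniformly bounded, `A_r` is squeezed for small `r` between the level sets
`{t | N ((c t) e_{i₀}) < 1 ∓ ε}`. By homogeneity these are the `(1 ∓ ε)^q`-dilates of `c⁻¹ S₀`, so
the measure of the gap between them is `((1 + ε)^q - (1 - ε)^q) |c⁻¹ S₀|`, which tends to `0`.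

Uniform boundedness: since `γ` is injective and `N` is positive off `0`, `N ∘ γ` is bounded below
away from `s = 0`, so `t ∈ A_r` forces `t r^q` to be small; there `|s| ≤ C |γ s i₀|` because
`c ≠ 0`, while `N (X_r t) < 1` bounds `|γ (t r^q) i₀|` by `R r^q`.
-/

open Filter Asymptotics Topology MeasureTheory Pointwise

open Set

section MetricFacts

variable {E : Type*} {ρ : E → E → ℝ}

lemma pos_of_ne_of_triangle (hsymm : ∀ x y, ρ x y = ρ y x)
    (htri : ∀ x y z, ρ x z ≤ ρ x y + ρ y z) (heq : ∀ x y, ρ x y = 0 ↔ x = y) {x y : E}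
    (hxy : x ≠ y) : 0 < ρ x y := by
  have h0 : 0 ≤ ρ x y := by linarith [htri x y x, (heq x x).2 rfl, hsymm x y]
  exact h0.lt_of_ne' (mt (heq x y).1 hxy)

lemma continuous_of_nhds_hasBasis_lt [TopologicalSpace E] (hsymm : ∀ x y, ρ x y = ρ y x)
    (htri : ∀ x y z, ρ x z ≤ ρ x y + ρ y z)
    (hbasis : ∀ x, (𝓝 x).HasBasis (fun ε : ℝ => 0 < ε) fun ε => {y | ρ x y < ε}) (x₀ : E) :
    Continuous (ρ x₀) := by
  refine continuous_iff_continuousAt.2 fun x => Metric.tendsto_nhds.2 fun ε hε => ?_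
  filter_upwards [(hbasis x).mem_of_mem hε] with y hy
  rw [Real.dist_eq, abs_sub_lt_iff]
  constructor <;> linarith [htri x₀ x y, htri x₀ y x, hsymm x y, show ρ x y < ε from hy]

end MetricFacts

lemma IsCompact.eventually_abs_lt_of_lt {h : ℝ → ℝ} {K : Set ℝ} (hK : IsCompact K)
    (hh : ContinuousOn h K) (hpos : ∀ s ∈ K, s ≠ 0 → 0 < h s) {η : ℝ} (hη : 0 < η) :
    ∀ᶠ r in 𝓝 (0 : ℝ), ∀ s ∈ K, h s < r → |s| < η := by
  have hKη : IsCompact (K ∩ {s | η ≤ |s|}) :=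
    hK.inter_right (isClosed_le continuous_const continuous_abs)
  obtain ⟨m, hm, hmh⟩ := hKη.exists_forall_le' (hh.mono inter_subset_left) fun s hs =>
    hpos s hs.1 (by rintro rfl; exact hη.not_ge (by simpa using hs.2))
  filter_upwards [eventually_lt_nhds hm] with r hr s hs hsr
  by_contra! hηs
  exact (hmh s ⟨hs, hηs⟩).not_gt (hsr.trans hr)

lemma TendstoUniformlyOn.comp_continuous_of_isCompact {ι α β γ : Type*} [TopologicalSpace α]
    [PseudoMetricSpace β] [ProperSpace β] [UniformSpace γ] {F : ι → α → β} {f : α → β}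
    {p : Filter ι} {t : Set α} {g : β → γ} (hF : TendstoUniformlyOn F f p t) (ht : IsCompact t)
    (hf : ContinuousOn f t) (hg : Continuous g) :
    TendstoUniformlyOn (fun i x => g (F i x)) (fun x => g (f x)) p t := by
  have hK := (ht.image_of_continuousOn hf).cthickening (r := 1)
  refine (hK.uniformContinuousOn_of_continuous hg.continuousOn).comp_tendstoUniformlyOn_eventually
    ?_ (fun x hx => Metric.self_subset_cthickening _ (mem_image_of_mem f hx)) hF
  filter_upwards [Metric.tendstoUniformlyOn_iff.1 hF 1 one_pos] with i hi x hx
  exact Metric.mem_cthickening_of_dist_le _ _ _ _ (mem_image_of_mem f hx)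
    (by rw [dist_comm]; exact (hi x hx).le)

lemma HasDerivAt.isBigO_sub_rev {g : ℝ → ℝ} {c x : ℝ} (h : HasDerivAt g c x) (hc : c ≠ 0) :
    (fun s => s - x) =O[𝓝 x] fun s => g s - g x := by
  simpa [Function.comp_def] using (h.isTheta_sub hc).isBigO_symm.comp_tendsto
    (tendsto_id.prodMk (tendsto_const_pure (b := x)))

lemma tendsto_inv_pow_nhdsGT_zero {q : ℕ} (hq : q ≠ 0) :
    Tendsto (fun r : ℝ => (r ^ q)⁻¹) (𝓝[>] 0) atTop := by
  simpa only [Function.comp_def, inv_pow] using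
    (tendsto_pow_atTop (α := ℝ) hq).comp tendsto_inv_nhdsGT_zero

lemma Asymptotics.IsLittleO.tendstoUniformlyOn_rescale {g : ℝ → ℝ} {k q : ℕ} (hq : q ≠ 0)
    (hg : g =o[𝓝 0] fun s => |s| ^ ((k : ℝ) / q)) (M : ℝ) :
    TendstoUniformlyOn (fun r t => r⁻¹ ^ k * g (t * r ^ q)) 0 (𝓝[>] 0) (Icc (-M) M) := by
  refine Metric.tendstoUniformlyOn_iff.2 fun ε hε => ?_
  set B := (|M| + 1) ^ ((k : ℝ) / q)
  have hB : 0 < B := by positivity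
  obtain ⟨η, hη, hgη⟩ := Metric.eventually_nhds_iff.1 (hg.def (by positivity : 0 < ε / (2 * B)))
  have hsmall : ∀ᶠ r in 𝓝 (0 : ℝ), (|M| + 1) * r ^ q < η :=
    ((continuous_const.mul (continuous_pow q)).tendsto' 0 0 (by simp [hq])).eventually
      (gt_mem_nhds hη)
  filter_upwards [nhdsWithin_le_nhds hsmall, self_mem_nhdsWithin] with r hrη (hr : 0 < r) t ht
  have htM : |t| ≤ |M| + 1 := by linarith [abs_le.2 ht, le_abs_self M, neg_abs_le M]
  have hts : |t * r ^ q| = |t| * r ^ q := by rw [abs_mul, abs_of_pos (pow_pos hr q)]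
  have hgt := hgη (show dist (t * r ^ q) 0 < η by
    rw [dist_zero_right, Real.norm_eq_abs, hts]
    exact (mul_le_mul_of_nonneg_right htM (by positivity)).trans_lt hrη)
  have hpow : |t * r ^ q| ^ ((k : ℝ) / q) = |t| ^ ((k : ℝ) / q) * r ^ k := by
    rw [hts, Real.mul_rpow (abs_nonneg t) (by positivity), ← Real.rpow_natCast r q,
      ← Real.rpow_mul hr.le, mul_div_cancel₀ _ (Nat.cast_ne_zero.2 hq), Real.rpow_natCast]
  rw [Real.norm_eq_abs, Real.norm_of_nonneg (by positivity), hpow] at hgt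
  rw [Pi.zero_apply, dist_zero_left, Real.norm_eq_abs, abs_mul, abs_of_pos (by positivity)]
  calc r⁻¹ ^ k * |g (t * r ^ q)| ≤ r⁻¹ ^ k * (ε / (2 * B) * (|t| ^ ((k : ℝ) / q) * r ^ k)) := by
        gcongr
    _ = ε / (2 * B) * |t| ^ ((k : ℝ) / q) := by rw [inv_pow]; field_simp
    _ ≤ ε / (2 * B) * B := by gcongr; exact Real.rpow_le_rpow (abs_nonneg t) htM (by positivity)
    _ < ε := by field_simp; linarith

section Sublevel

variable {f : ℝ → ℝ} {q : ℕ}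

lemma sublevel_eq_smul (hf : ∀ r : ℝ, 0 < r → ∀ t, f (r ^ q * t) = r * f t) {u : ℝ}
    (hu : 0 < u) : {t | f t < u} = u ^ q • {t | f t < 1} := by
  ext t
  have huq : u ^ q ≠ 0 := by positivity
  rw [mem_smul_set_iff_inv_smul_mem₀ huq, smul_eq_mul]
  show f t < u ↔ f ((u ^ q)⁻¹ * t) < 1
  rw [← mul_lt_iff_lt_one_right hu, ← hf u hu, mul_inv_cancel_left₀ huq]

lemma volume_sublevel (hf : ∀ r : ℝ, 0 < r → ∀ t, f (r ^ q * t) = r * f t) {u : ℝ}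
    (hu : 0 < u) : volume {t | f t < u} = ENNReal.ofReal (u ^ q) * volume {t | f t < 1} := by
  rw [sublevel_eq_smul hf hu, Measure.addHaar_smul_of_nonneg volume (by positivity),
    Module.finrank_self, pow_one]

lemma tendsto_volume_sublevel_diff (hfc : Continuous f)
    (hf : ∀ r : ℝ, 0 < r → ∀ t, f (r ^ q * t) = r * f t) (hfin : volume {t | f t < 1} ≠ ⊤) :
    Tendsto (fun ε => volume ({t | f t < 1 + ε} \ {t | f t < 1 - ε})) (𝓝[>] 0) (𝓝 0) := by
  have hgap : Tendsto (fun ε : ℝ => ENNReal.ofReal ((1 + ε) ^ q - (1 - ε) ^ q) *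
      volume {t | f t < 1}) (𝓝 0) (𝓝 0) := by
    have := ENNReal.Tendsto.mul_const ((ENNReal.continuous_ofReal.comp
      (by fun_prop : Continuous fun ε : ℝ => (1 + ε) ^ q - (1 - ε) ^ q)).tendsto 0) (Or.inr hfin)
    simpa using this
  refine (hgap.mono_left nhdsWithin_le_nhds).congr' ?_
  filter_upwards [Ioo_mem_nhdsGT one_pos] with ε ⟨hε₀, hε₁⟩
  symm
  have hlo : 0 < 1 - ε := by linarith
  have hsub : {t | f t < 1 - ε} ⊆ {t | f t < 1 + ε} := fun t (ht : f t < 1 - ε) =>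
    show f t < 1 + ε by linarith
  rw [measure_sdiff hsub (isOpen_lt hfc continuous_const).measurableSet.nullMeasurableSet
      (by rw [volume_sublevel hf hlo]; exact ENNReal.mul_ne_top ENNReal.ofReal_ne_top hfin),
    volume_sublevel hf (by linarith), volume_sublevel hf hlo, ← ENNReal.sub_mul (fun _ _ => hfin),
    ← ENNReal.ofReal_sub _ (by positivity)]

end Sublevel

lemma tendsto_measure_symmDiff_of_squeeze {α ι : Type*} [MeasurableSpace α] {μ : Measure α}
    {l : Filter ι} {A : ι → Set α} {B : ℝ → Set α} (hB : Monotone B)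
    (hgap : Tendsto (fun ε => μ (B (1 + ε) \ B (1 - ε))) (𝓝[>] 0) (𝓝 0))
    (hsq : ∀ ε > 0, ∀ᶠ i in l, B (1 - ε) ⊆ A i ∧ A i ⊆ B (1 + ε)) :
    Tendsto (fun i => μ (symmDiff (A i) (B 1))) l (𝓝 0) := by
  refine ENNReal.tendsto_nhds_zero.2 fun δ hδ => ?_
  obtain ⟨ε, hεδ, hε : 0 < ε⟩ :=
    ((hgap.eventually (eventually_le_nhds hδ)).and self_mem_nhdsWithin).exists
  filter_upwards [hsq ε hε] with i ⟨hlo, hhi⟩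
  refine le_trans (measure_mono ?_) hεδ
  rw [Set.symmDiff_def]
  exact union_subset (sdiff_subset_sdiff hhi (hB (by linarith)))
    (sdiff_subset_sdiff (hB (by linarith)) hlo)

lemma eventually_sublevel_subset_and_subset {ι : Type*} {l : Filter ι} {A : ι → Set ℝ}
    {F : ι → ℝ → ℝ} {f : ℝ → ℝ} {b : ι → ℝ} {M : ℝ}
    (hA : ∀ᶠ i in l, ∀ t, t ∈ A i ↔ |t| ≤ b i ∧ F i t < 1) (hb : Tendsto b l atTop)
    (hAM : ∀ᶠ i in l, ∀ t ∈ A i, |t| ≤ M) (hfM : ∀ t, f t < 1 → |t| ≤ M)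
    (hF : TendstoUniformlyOn F f l (Icc (-M) M)) {ε : ℝ} (hε : 0 < ε) :
    ∀ᶠ i in l, {t | f t < 1 - ε} ⊆ A i ∧ A i ⊆ {t | f t < 1 + ε} := by
  filter_upwards [hA, hAM, hb.eventually_ge_atTop M, Metric.tendstoUniformlyOn_iff.1 hF ε hε]
    with i hAi hAMi hbi hFi
  have hclose : ∀ t, |t| ≤ M → |F i t - f t| < ε := fun t ht => by
    rw [← Real.dist_eq, dist_comm]; exact hFi t (abs_le.1 ht)
  constructor
  · intro t (ht : f t < 1 - ε)
    have htM := hfM t (by linarith)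
    rw [hAi]
    exact ⟨htM.trans hbi, by linarith [(abs_lt.1 (hclose t htM)).2]⟩
  · intro t ht
    have htM := hAMi t ht
    rw [hAi] at ht
    show f t < 1 + ε
    linarith [(abs_lt.1 (hclose t htM)).1, ht.2]

lemma tendsto_volume_symmDiff_sublevel {ι : Type*} {l : Filter ι} {A : ι → Set ℝ}
    {F : ι → ℝ → ℝ} {f : ℝ → ℝ} {b : ι → ℝ} {M : ℝ} {q : ℕ} (hfc : Continuous f)
    (hf : ∀ r : ℝ, 0 < r → ∀ t, f (r ^ q * t) = r * f t)
    (hA : ∀ᶠ i in l, ∀ t, t ∈ A i ↔ |t| ≤ b i ∧ F i t < 1) (hb : Tendsto b l atTop)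
    (hAM : ∀ᶠ i in l, ∀ t ∈ A i, |t| ≤ M) (hfM : ∀ t, f t < 1 → |t| ≤ M)
    (hF : TendstoUniformlyOn F f l (Icc (-M) M)) :
    Tendsto (fun i => volume (symmDiff (A i) {t | f t < 1})) l (𝓝 0) := by
  have hfin : volume {t | f t < 1} ≠ ⊤ :=
    ((measure_mono fun t ht => abs_le.1 (hfM t ht)).trans_lt measure_Icc_lt_top).ne
  exact tendsto_measure_symmDiff_of_squeeze (B := fun u => {t | f t < u})
    (fun u v huv t ht => lt_of_lt_of_le ht huv) (tendsto_volume_sublevel_diff hfc hf hfin)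
    fun ε hε => eventually_sublevel_subset_and_subset hA hb hAM hfM hF hε

section Dilation

variable {n : ℕ} {d : Fin n → ℕ}

def dilate (d : Fin n → ℕ) (r : ℝ) (x : Fin n → ℝ) : Fin n → ℝ := fun j => r ^ d j * x j

@[simp]
lemma dilate_apply (r : ℝ) (x : Fin n → ℝ) (j : Fin n) : dilate d r x j = r ^ d j * x j := rfl

lemma dilate_dilate (a b : ℝ) (x : Fin n → ℝ) : dilate d a (dilate d b x) = dilate d (a * b) x := by
  ext j; simp only [dilate_apply, mul_pow, mul_assoc]

lemma dilate_one (x : Fin n → ℝ) : dilate d 1 x = x := by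
  ext j; simp

lemma dilate_zero (hd : ∀ j, 1 ≤ d j) (x : Fin n → ℝ) : dilate d 0 x = 0 := by
  ext j; simp [zero_pow (Nat.one_le_iff_ne_zero.mp (hd j))]

lemma dilate_single [DecidableEq (Fin n)] (r : ℝ) (i : Fin n) (a : ℝ) :
    dilate d r (Pi.single i a) = Pi.single i (r ^ d i * a) := by
  ext j; rcases eq_or_ne j i with rfl | hj <;> simp [*]

lemma continuous_dilate_left (x : Fin n → ℝ) : Continuous fun r => dilate d r x := by
  unfold dilate; fun_prop

lemma pow_mul_norm_le_norm_dilate {D : ℕ} (hD : ∀ j, d j ≤ D) {r : ℝ} (hr₀ : 0 ≤ r) (hr₁ : r ≤ 1)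
    (x : Fin n → ℝ) : r ^ D * ‖x‖ ≤ ‖dilate d r x‖ := by
  rw [← abs_of_nonneg (pow_nonneg hr₀ D), ← Real.norm_eq_abs, ← norm_smul]
  refine (pi_norm_le_iff_of_nonneg (norm_nonneg _)).2 fun j => (norm_le_pi_norm _ j).trans' ?_
  simp only [Pi.smul_apply, smul_eq_mul, dilate_apply, norm_mul]
  gcongr
  exact abs_le_abs_of_nonneg (by positivity) (pow_le_pow_of_le_one hr₀ hr₁ (hD j))

lemma exists_norm_dilate_eq_one (hd : ∀ j, 1 ≤ d j) {x : Fin n → ℝ} (hx : 1 ≤ ‖x‖) :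
    ∃ r ∈ Ioc (0 : ℝ) 1, ‖dilate d r x‖ = 1 := by
  obtain ⟨r, hr, hrx⟩ := intermediate_value_Icc zero_le_one
    (continuous_norm.comp (continuous_dilate_left (d := d) x)).continuousOn
    (show (1 : ℝ) ∈ Icc _ _ by simpa [dilate_zero hd, dilate_one] using hx)
  refine ⟨r, ⟨hr.1.lt_of_ne ?_, hr.2⟩, hrx⟩
  rintro rfl
  simp [dilate_zero hd] at hrx

def IsDilationHomogeneous (d : Fin n → ℕ) (N : (Fin n → ℝ) → ℝ) : Prop :=
  ∀ r : ℝ, 0 < r → ∀ x, N (dilate d r x) = r * N x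

def rescaledPreimage (N : (Fin n → ℝ) → ℝ) (γ : ℝ → Fin n → ℝ) (q : ℕ) (r : ℝ) : Set ℝ :=
  {t | |t| ≤ (r ^ q)⁻¹ ∧ N (γ (t * r ^ q)) < r}

namespace IsDilationHomogeneous

variable {N : (Fin n → ℝ) → ℝ}

lemma eq_mul_dilate_inv (h : IsDilationHomogeneous d N) {r : ℝ} (hr : 0 < r) (y : Fin n → ℝ) :
    N y = r * N (dilate d r⁻¹ y) := by
  rw [← h r hr, dilate_dilate, mul_inv_cancel₀ hr.ne', dilate_one]

lemma lt_iff_dilate_inv_lt_one (h : IsDilationHomogeneous d N) {r : ℝ} (hr : 0 < r)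
    (y : Fin n → ℝ) : N y < r ↔ N (dilate d r⁻¹ y) < 1 := by
  rw [h.eq_mul_dilate_inv hr y]
  exact mul_lt_iff_lt_one_right hr

lemma mem_rescaledPreimage_iff (h : IsDilationHomogeneous d N) {γ : ℝ → Fin n → ℝ} {q : ℕ}
    {r : ℝ} (hr : 0 < r) (t : ℝ) :
    t ∈ rescaledPreimage N γ q r ↔ |t| ≤ (r ^ q)⁻¹ ∧ N (dilate d r⁻¹ (γ (t * r ^ q))) < 1 := by
  rw [rescaledPreimage, mem_ofPred_eq, h.lt_iff_dilate_inv_lt_one hr]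

lemma single_mul [DecidableEq (Fin n)] (h : IsDilationHomogeneous d N) {i : Fin n} {q : ℕ}
    (hi : d i = q) (a : ℝ) {r : ℝ} (hr : 0 < r) (t : ℝ) :
    N (Pi.single i (a * (r ^ q * t))) = r * N (Pi.single i (a * t)) := by
  rw [← h r hr, dilate_single, hi, mul_left_comm]

lemma exists_norm_le_of_le_one (h : IsDilationHomogeneous d N) (hd : ∀ j, 1 ≤ d j)
    (hNc : Continuous N) (hNpos : ∀ x ≠ 0, 0 < N x) :
    ∃ R > 0, ∀ x, N x ≤ 1 → ‖x‖ ≤ R := by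
  obtain ⟨m, hm, hmN⟩ := (isCompact_sphere (0 : Fin n → ℝ) 1).exists_forall_le'
    hNc.continuousOn fun y hy => hNpos y (ne_zero_of_mem_unit_sphere ⟨y, hy⟩)
  set D := Finset.univ.sup d
  refine ⟨max 1 (m⁻¹ ^ D), by positivity, fun x hx => ?_⟩
  rcases le_or_gt ‖x‖ 1 with hx1 | hx1
  · exact hx1.trans (le_max_left _ _)
  obtain ⟨r, ⟨hr₀, hr₁⟩, hrx⟩ := exists_norm_dilate_eq_one hd hx1.le
  have hmr : m ≤ r := calc
    m ≤ N (dilate d r x) := hmN _ (mem_sphere_zero_iff_norm.2 hrx)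
    _ = r * N x := h r hr₀ x
    _ ≤ r := mul_le_of_le_one_right hr₀.le hx
  have hxr : r ^ D * ‖x‖ ≤ 1 :=
    hrx ▸ pow_mul_norm_le_norm_dilate (fun j => Finset.le_sup (Finset.mem_univ j)) hr₀.le hr₁ x
  refine le_max_of_le_right ?_
  calc ‖x‖ ≤ (r ^ D)⁻¹ := by rwa [← one_div, le_div_iff₀' (by positivity)]
    _ ≤ m⁻¹ ^ D := by rw [← inv_pow]; gcongr

end IsDilationHomogeneous

lemma inv_smul_setOf_smul_single [DecidableEq (Fin n)] {N : (Fin n → ℝ) → ℝ}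
    {i : Fin n} {c : ℝ} (hc : c ≠ 0) :
    c⁻¹ • {s : ℝ | N (s • Pi.single i 1) < 1} = {t | N (Pi.single i (c * t)) < 1} := by
  ext t
  rw [mem_smul_set_iff_inv_smul_mem₀ (inv_ne_zero hc), inv_inv, smul_eq_mul]
  simp only [mem_ofPred_eq]
  rw [← Pi.single_smul', smul_eq_mul, mul_one]

lemma exists_eventually_abs_le_of_mem_rescaledPreimage {N : (Fin n → ℝ) → ℝ}
    (hN : IsDilationHomogeneous d N) {R : ℝ} (hR0 : 0 < R) (hR : ∀ x, N x ≤ 1 → ‖x‖ ≤ R)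
    {γ : ℝ → Fin n → ℝ} {i₀ : Fin n} {q : ℕ} {c : ℝ} (hi₀ : d i₀ = q)
    (hγc : ContinuousOn (fun s => N (γ s)) (Icc (-1) 1))
    (hγpos : ∀ s ∈ Icc (-1 : ℝ) 1, s ≠ 0 → 0 < N (γ s)) (hγ0 : γ 0 = 0)
    (hderiv : HasDerivAt (fun s => γ s i₀) c 0) (hc : c ≠ 0) :
    ∃ M > 0, ∀ᶠ r in 𝓝[>] (0 : ℝ), ∀ t ∈ rescaledPreimage N γ q r, |t| ≤ M := by
  obtain ⟨C, hC, hCO⟩ := (hderiv.isBigO_sub_rev hc).exists_pos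
  obtain ⟨η, hη, hCη⟩ := Metric.eventually_nhds_iff.1 hCO.bound
  refine ⟨C * R, by positivity, ?_⟩
  filter_upwards [nhdsWithin_le_nhds (isCompact_Icc.eventually_abs_lt_of_lt hγc hγpos hη),
    self_mem_nhdsWithin] with r hr (hr0 : 0 < r) t htA
  obtain ⟨ht, hNt⟩ := (hN.mem_rescaledPreimage_iff hr0 t).1 htA
  have hrq : 0 < r ^ q := pow_pos hr0 q
  have hts : |t * r ^ q| = |t| * r ^ q := by rw [abs_mul, abs_of_pos hrq]
  have hs : t * r ^ q ∈ Icc (-1 : ℝ) 1 := abs_le.1 <| by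
    rw [hts]; exact (mul_le_mul_of_nonneg_right ht hrq.le).trans (inv_mul_cancel₀ hrq.ne').le
  have hlow : |t * r ^ q| ≤ C * |γ (t * r ^ q) i₀| := by
    simpa [hγ0] using hCη (show dist (t * r ^ q) 0 < η by simpa using hr _ hs htA.2)
  have hup : r⁻¹ ^ q * |γ (t * r ^ q) i₀| ≤ R := by
    have := (norm_le_pi_norm _ i₀).trans (hR _ hNt.le)
    rwa [dilate_apply, hi₀, Real.norm_eq_abs, abs_mul, abs_of_pos (by positivity)] at this
  have hγR : |γ (t * r ^ q) i₀| ≤ r ^ q * R := by rwa [inv_pow, inv_mul_le_iff₀ hrq] at hup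
  have : |t| * r ^ q ≤ C * R * r ^ q := calc
    |t| * r ^ q ≤ C * |γ (t * r ^ q) i₀| := hts ▸ hlow
    _ ≤ C * (r ^ q * R) := by gcongr
    _ = C * R * r ^ q := by ring
  exact le_of_mul_le_mul_right this hrq

section Curve

variable [DecidableEq (Fin n)] {γ : ℝ → Fin n → ℝ} {i₀ : Fin n} {q : ℕ} {c : ℝ}

lemma isLittleO_sub_single (hq : q ≠ 0) (hi₀ : d i₀ = q) (hγ0 : γ 0 = 0)
    (hderiv : HasDerivAt (fun s => γ s i₀) c 0)
    (hlito : ∀ i, i ≠ i₀ → (fun s => γ s i) =o[𝓝 0] fun s => |s| ^ ((d i : ℝ) / q)) (j : Fin n) :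
    (fun s => γ s j - (Pi.single i₀ (c * s) : Fin n → ℝ) j) =o[𝓝 0]
      fun s => |s| ^ ((d j : ℝ) / q) := by
  rcases eq_or_ne j i₀ with rfl | hj
  · have h := (hasDerivAt_iff_isLittleO.1 hderiv).abs_right
    rw [hi₀, div_self (Nat.cast_ne_zero.2 hq)]
    simpa [hγ0, mul_comm c] using h
  · simpa [Pi.single_eq_of_ne hj] using hlito j hj

lemma tendstoUniformlyOn_dilate_rescale (hq : q ≠ 0) (hi₀ : d i₀ = q)
    (hγ : ∀ j, (fun s => γ s j - (Pi.single i₀ (c * s) : Fin n → ℝ) j) =o[𝓝 0]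
      fun s => |s| ^ ((d j : ℝ) / q))
    (M : ℝ) :
    TendstoUniformlyOn (fun r t => dilate d r⁻¹ (γ (t * r ^ q))) (fun t => Pi.single i₀ (c * t))
      (𝓝[>] 0) (Icc (-M) M) := by
  refine Metric.tendstoUniformlyOn_iff.2 fun ε hε => ?_
  have hcoord := fun j =>
    Metric.tendstoUniformlyOn_iff.1 ((hγ j).tendstoUniformlyOn_rescale hq M) ε hε
  filter_upwards [eventually_all.2 hcoord, self_mem_nhdsWithin] with r hr (hr0 : 0 < r) t ht
  refine (dist_pi_lt_iff hε).2 fun j => ?_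
  have hmodel : dilate d r⁻¹ (Pi.single i₀ (c * (t * r ^ q))) = Pi.single i₀ (c * t) := by
    rw [dilate_single, hi₀, inv_pow]; congr 1; field_simp
  rw [← hmodel]
  simpa [Real.dist_eq, mul_sub, abs_sub_comm] using hr j t ht

end Curve

end Dilation

theorem rescaled_ball_preimage_convergence_general
    (n : ℕ) (d : Fin n → ℕ) (hd1 : ∀ j, 1 ≤ d j)
    (q : ℕ) (hq : 1 ≤ q) (i₀ : Fin n) (hi₀ : d i₀ = q)
    -- `ρ` is a metric on `ℝⁿ` inducing the Euclidean topology
    (ρ : (Fin n → ℝ) → (Fin n → ℝ) → ℝ)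
    (hρsymm : ∀ x y, ρ x y = ρ y x)
    (hρtri : ∀ x y z, ρ x z ≤ ρ x y + ρ y z)
    (hρeq : ∀ x y, ρ x y = 0 ↔ x = y)
    (hρtop : ∀ x : Fin n → ℝ, (𝓝 x).HasBasis (fun ε : ℝ => 0 < ε) fun ε => {y | ρ x y < ε})
    -- homogeneity of `ρ` with respect to the anisotropic dilations
    (hρhom : ∀ r : ℝ, 0 < r → ∀ x : Fin n → ℝ,
      ρ 0 (fun j => r ^ (d j) * x j) = r * ρ 0 x)
    -- `γ : [-1,1] → ℝⁿ` is a `C¹` injective curve with derivative `γ'`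
    (γ γ' : ℝ → Fin n → ℝ)
    (hderiv : ∀ t ∈ Set.Icc (-1 : ℝ) 1, HasDerivWithinAt γ (γ' t) (Set.Icc (-1 : ℝ) 1) t)
    (hinj : Set.InjOn γ (Set.Icc (-1 : ℝ) 1))
    (hγ0 : γ 0 = 0)
    (hlito : ∀ i, i ≠ i₀ →
      (fun t : ℝ => γ t i) =o[𝓝 0] fun t : ℝ => |t| ^ ((d i : ℝ) / (q : ℝ)))
    (c : ℝ) (hcdef : c = γ' 0 i₀) (hc : c ≠ 0)
    (A : ℝ → Set ℝ)
    (hA : ∀ r : ℝ, A r = {t : ℝ | |t| ≤ (r ^ q)⁻¹ ∧ ρ 0 (γ (t * r ^ q)) < r})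
    (S₀ : Set ℝ)
    (hS₀ : S₀ = {s : ℝ | ρ 0 (s • (Pi.single i₀ 1 : Fin n → ℝ)) < 1}) :
    Tendsto (fun r : ℝ => volume (symmDiff (A r) (c⁻¹ • S₀))) (𝓝[>] 0) (𝓝 0) ∧
      ∃ M₀ : ℝ, 0 < M₀ ∧ ∀ᶠ r in 𝓝[>] (0 : ℝ), A r ⊆ Set.Icc (-M₀) M₀ := by
  obtain rfl : A = rescaledPreimage (ρ 0) γ q := funext hA
  obtain rfl := hS₀
  set N := ρ 0
  have hq0 : q ≠ 0 := Nat.one_le_iff_ne_zero.mp hq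
  have hNc : Continuous N := continuous_of_nhds_hasBasis_lt hρsymm hρtri hρtop 0
  have hNpos : ∀ x ≠ 0, 0 < N x := fun x hx => pos_of_ne_of_triangle hρsymm hρtri hρeq hx.symm
  have hhom : IsDilationHomogeneous d N := hρhom
  obtain ⟨R, hR0, hR⟩ := hhom.exists_norm_le_of_le_one hd1 hNc hNpos
  have hγc : ContinuousOn γ (Icc (-1) 1) := fun t ht => (hderiv t ht).continuousWithinAt
  have hγ'0 : HasDerivAt (fun s => γ s i₀) c 0 := hcdef ▸ hasDerivAt_pi.1
    ((hderiv 0 (by norm_num)).hasDerivAt (Icc_mem_nhds (by norm_num) (by norm_num))) i₀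
  obtain ⟨M₀, hM₀, hAM⟩ := exists_eventually_abs_le_of_mem_rescaledPreimage hhom hR0 hR hi₀
    (hNc.comp_continuousOn hγc)
    (fun s hs hs0 => hNpos _ fun h => hs0 (hinj hs (by norm_num) (h.trans hγ0.symm))) hγ0 hγ'0 hc
  refine ⟨?_, M₀, hM₀, hAM.mono fun r hr t ht => abs_le.1 (hr t ht)⟩
  have hsc : Continuous fun t : ℝ => (Pi.single i₀ (c * t) : Fin n → ℝ) :=
    (continuous_single i₀).comp (continuous_const_mul c)
  have hfM : ∀ t, N (Pi.single i₀ (c * t)) < 1 → |t| ≤ R / |c| := fun t ht => by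
    simpa [Pi.norm_single, abs_mul, le_div_iff₀' (abs_pos.2 hc)] using hR _ ht.le
  rw [inv_smul_setOf_smul_single hc]
  exact tendsto_volume_symmDiff_sublevel (hNc.comp hsc) (fun r hr t => hhom.single_mul hi₀ c hr t)
    (eventually_mem_nhdsWithin.mono fun r hr => hhom.mem_rescaledPreimage_iff hr)
    (tendsto_inv_pow_nhdsGT_zero hq0) (hAM.mono fun r hr t ht => (hr t ht).trans (le_max_left _ _))
    (fun t ht => (hfM t ht).trans (le_max_right _ _))
    ((tendstoUniformlyOn_dilate_rescale hq0 hi₀ (isLittleO_sub_single hq0 hi₀ hγ0 hγ'0 hlito)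
      (max M₀ (R / |c|))).comp_continuous_of_isCompact isCompact_Icc hsc.continuousOn hNc)

/-- Convergence of the rescaled preimages of homogeneous balls along a curve at a point of
maximum degree (from the proof of Theorem 1.3): with
`A_r = {t : |t| ≤ r^{-q}, ρ(0,γ(t r^q)) < r}` and `S₀ = {s : ρ(0, s e_{i₀}) < 1}`,
the Lebesgue measure of `A_r Δ (c⁻¹ • S₀)` tends to `0` as `r → 0⁺`, and the sets `A_r`
are uniformly bounded for all small `r > 0`. -/
theorem rescaled_ball_preimage_convergence
    (n : ℕ) (hn : 1 ≤ n) (d : Fin n → ℕ) (hd1 : ∀ j, 1 ≤ d j)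
    (q : ℕ) (hq : 1 ≤ q) (i₀ : Fin n) (hi₀ : d i₀ = q)
    -- `ρ` is a metric on `ℝⁿ` inducing the Euclidean topology
    (ρ : (Fin n → ℝ) → (Fin n → ℝ) → ℝ)
    (hρsymm : ∀ x y, ρ x y = ρ y x)
    (hρtri : ∀ x y z, ρ x z ≤ ρ x y + ρ y z)
    (hρeq : ∀ x y, ρ x y = 0 ↔ x = y)
    (hρtop : ∀ x : Fin n → ℝ, (𝓝 x).HasBasis (fun ε : ℝ => 0 < ε) fun ε => {y | ρ x y < ε})
    -- homogeneity of `ρ` with respect to the anisotropic dilations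
    (hρhom : ∀ r : ℝ, 0 < r → ∀ x : Fin n → ℝ,
      ρ 0 (fun j => r ^ (d j) * x j) = r * ρ 0 x)
    -- `γ : [-1,1] → ℝⁿ` is a `C¹` injective curve with derivative `γ'`
    (γ γ' : ℝ → Fin n → ℝ)
    (hderiv : ∀ t ∈ Set.Icc (-1 : ℝ) 1, HasDerivWithinAt γ (γ' t) (Set.Icc (-1 : ℝ) 1) t)
    (hγ'c : ContinuousOn γ' (Set.Icc (-1 : ℝ) 1))
    (hinj : Set.InjOn γ (Set.Icc (-1 : ℝ) 1))
    (hγ0 : γ 0 = 0)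
    (hlito : ∀ i, i ≠ i₀ →
      (fun t : ℝ => γ t i) =o[𝓝 0] fun t : ℝ => |t| ^ ((d i : ℝ) / (q : ℝ)))
    (c : ℝ) (hcdef : c = γ' 0 i₀) (hc : c ≠ 0)
    (A : ℝ → Set ℝ)
    (hA : ∀ r : ℝ, A r = {t : ℝ | |t| ≤ (r ^ q)⁻¹ ∧ ρ 0 (γ (t * r ^ q)) < r})
    (S₀ : Set ℝ)
    (hS₀ : S₀ = {s : ℝ | ρ 0 (s • (Pi.single i₀ 1 : Fin n → ℝ)) < 1}) :
    Tendsto (fun r : ℝ => volume (symmDiff (A r) (c⁻¹ • S₀))) (𝓝[>] 0) (𝓝 0) ∧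
      ∃ M₀ : ℝ, 0 < M₀ ∧ ∀ᶠ r in 𝓝[>] (0 : ℝ), A r ⊆ Set.Icc (-M₀) M₀ :=
  rescaled_ball_preimage_convergence_general n d hd1 q hq i₀ hi₀ ρ hρsymm hρtri hρeq hρtop hρhom γ
    γ' hderiv hinj hγ0 hlito c hcdef hc A hA S₀ hS₀
end
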